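/- arXiv:1909.09107 — 4 statements merged into one kernel-verified Lean document; each statement's English description precedes it below -/
import Mathlib

section
/- Let (γ_k : k ≥ 0) be a sequence of positive real numbers and let (θ_k : k ≥ 0) be a sequence of continuous functions on a compact set K ⊂ ℝ^d with values in (0, 2π). Suppose there is a function θ : K → (0, 2π) such that θ_k → θ uniformly on K. Then: (1) there exists c > 0 such that for all x ∈ K and all n ∈ ℕ, |∑_{k=0}^n γ_k · exp(i ∑_{j=0}^k θ_j(x))| ≤ c · (γ_0 + ∑_{k=0}^{n−1} (|γ_{k+1} − γ_k| + γ_{k+1} · |θ_{k+1}(x) − θ(x)|)); and (2) if moreover ∑_{k=0}^∞ γ_k = ∞ and γ_{n−1}/γ_n → 1 as n → ∞, then (∑_{j=0}^n γ_j)^{−1} · ∑_{k=0}^n γ_k · exp(i ∑_{j=0}^k θ_j(x)) → 0 as n → ∞, uniformly with respect to x ∈ K. -/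
open Filter Real Topology


lemma norm_exp_I_mul_real (r : ℝ) : ‖Complex.exp (Complex.I * r)‖ = 1 := by
  rw [mul_comm]; exact Complex.norm_exp_ofReal_mul_I r

lemma norm_exp_I_mul_sub_one (t : ℝ) : ‖Complex.exp (Complex.I * t) - 1‖ ≤ 2 * |t| := by
  rcases le_or_gt |t| 1 with h | h
  · have := Complex.norm_exp_sub_one_le (x := Complex.I * t) (by simpa using h)
    simpa using this
  · calc ‖Complex.exp (Complex.I * t) - 1‖ ≤ ‖Complex.exp (Complex.I * t)‖ + ‖(1:ℂ)‖ :=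
        norm_sub_le _ _
      _ = 2 := by rw [norm_exp_I_mul_real]; norm_num
      _ ≤ 2 * |t| := by nlinarith

lemma abel_sum (γ : ℕ → ℝ) (g : ℕ → ℂ) (n : ℕ) :
    ∑ k ∈ Finset.range (n+1), (γ k : ℂ) * (g (k+1) - g k)
      = γ n * g (n+1) - γ 0 * g 0 - ∑ k ∈ Finset.range n, ((γ (k+1) : ℂ) - γ k) * g (k+1) := by
  induction n with
  | zero => simp; ring
  | succ n ih =>
    rw [Finset.sum_range_succ, ih, Finset.sum_range_succ]
    ring

lemma gamma_head_le (γ : ℕ → ℝ) (n : ℕ) :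
    γ n ≤ γ 0 + ∑ k ∈ Finset.range n, |γ (k+1) - γ k| := by
  have h1 : γ n - γ 0 = ∑ k ∈ Finset.range n, (γ (k+1) - γ k) := (Finset.sum_range_sub γ n).symm
  have h2 : ∑ k ∈ Finset.range n, (γ (k+1) - γ k) ≤ ∑ k ∈ Finset.range n, |γ (k+1) - γ k| :=
    Finset.sum_le_sum fun k _ => le_abs_self _
  linarith

lemma pointwise_bound (γ : ℕ → ℝ) (hγ : ∀ k, 0 < γ k) (φ : ℕ → ℝ) (t : ℝ)
    (hφbd : ∀ k, |φ k - t| ≤ 4 * π) (n : ℕ) :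
    ‖1 - Complex.exp (-(Complex.I * t))‖ *
      ‖∑ k ∈ Finset.range (n + 1), (γ k : ℂ) *
        Complex.exp (Complex.I * ((∑ j ∈ Finset.range (k + 1), φ j : ℝ) : ℂ))‖ ≤
    (2 + 8 * π) * (γ 0 + ∑ k ∈ Finset.range n,
      (|γ (k + 1) - γ k| + γ (k + 1) * |φ (k + 1) - t|)) := by
  set E : ℕ → ℂ := fun k => Complex.exp (Complex.I * ((∑ j ∈ Finset.range k, φ j : ℝ) : ℂ))
    with hEdef
  have hEnorm : ∀ k, ‖E k‖ = 1 := fun k => norm_exp_I_mul_real _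
  have hE : ∀ k, E (k+1) * Complex.exp (-(Complex.I * t))
      = E k * Complex.exp (Complex.I * ((φ k - t : ℝ) : ℂ)) := by
    intro k
    rw [hEdef]
    simp only
    rw [← Complex.exp_add, ← Complex.exp_add]
    congr 1
    rw [Finset.sum_range_succ]
    push_cast
    ring
  have hid : (1 - Complex.exp (-(Complex.I * t))) * ∑ k ∈ Finset.range (n+1), (γ k : ℂ) * E (k+1)
      = (∑ k ∈ Finset.range (n+1), (γ k : ℂ) * (E (k+1) - E k))
        + ∑ k ∈ Finset.range (n+1), (γ k : ℂ) * E k *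
            (1 - Complex.exp (Complex.I * ((φ k - t : ℝ) : ℂ))) := by
    rw [Finset.mul_sum, ← Finset.sum_add_distrib]
    refine Finset.sum_congr rfl fun k _ => ?_
    linear_combination (-(γ k : ℂ)) * hE k
  set A := ∑ k ∈ Finset.range n, |γ (k + 1) - γ k| with hA
  set B := ∑ k ∈ Finset.range n, γ (k + 1) * |φ (k + 1) - t| with hB
  have hA0 : 0 ≤ A := Finset.sum_nonneg fun k _ => abs_nonneg _
  have hB0 : 0 ≤ B := Finset.sum_nonneg fun k _ => mul_nonneg (hγ _).le (abs_nonneg _)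
  have hS1 : ‖∑ k ∈ Finset.range (n+1), (γ k : ℂ) * (E (k+1) - E k)‖ ≤ γ n + γ 0 + A := by
    rw [abel_sum]
    calc ‖(γ n : ℂ) * E (n+1) - γ 0 * E 0
          - ∑ k ∈ Finset.range n, ((γ (k+1) : ℂ) - γ k) * E (k+1)‖
        ≤ ‖(γ n : ℂ) * E (n+1)‖ + ‖(γ 0 : ℂ) * E 0‖
          + ‖∑ k ∈ Finset.range n, ((γ (k+1) : ℂ) - γ k) * E (k+1)‖ := by
          refine (norm_sub_le _ _).trans ?_
          gcongr
          exact norm_sub_le _ _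
      _ ≤ γ n + γ 0 + A := by
          gcongr
          · rw [norm_mul, hEnorm, mul_one, Complex.norm_real, Real.norm_eq_abs,
              abs_of_pos (hγ n)]
          · rw [norm_mul, hEnorm, mul_one, Complex.norm_real, Real.norm_eq_abs,
              abs_of_pos (hγ 0)]
          · refine (norm_sum_le _ _).trans ?_
            rw [hA]
            refine Finset.sum_le_sum fun k _ => ?_
            rw [norm_mul, hEnorm, mul_one, ← Complex.ofReal_sub, Complex.norm_real,
              Real.norm_eq_abs, abs_sub_comm]
  have hS2 : ‖∑ k ∈ Finset.range (n+1), (γ k : ℂ) * E k *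
        (1 - Complex.exp (Complex.I * ((φ k - t : ℝ) : ℂ)))‖ ≤ 8 * π * γ 0 + 2 * B := by
    refine (norm_sum_le _ _).trans ?_
    have hterm : ∀ k, ‖(γ k : ℂ) * E k *
          (1 - Complex.exp (Complex.I * ((φ k - t : ℝ) : ℂ)))‖ ≤
        γ k * (2 * |φ k - t|) := by
      intro k
      rw [norm_mul, norm_mul, hEnorm, mul_one, Complex.norm_real, Real.norm_eq_abs,
        abs_of_pos (hγ k), ← norm_neg, neg_sub]
      exact mul_le_mul_of_nonneg_left (norm_exp_I_mul_sub_one _) (hγ k).le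
    calc ∑ k ∈ Finset.range (n+1), ‖(γ k : ℂ) * E k *
          (1 - Complex.exp (Complex.I * ((φ k - t : ℝ) : ℂ)))‖
        ≤ ∑ k ∈ Finset.range (n+1), γ k * (2 * |φ k - t|) :=
          Finset.sum_le_sum fun k _ => hterm k
      _ = γ 0 * (2 * |φ 0 - t|)
          + ∑ k ∈ Finset.range n, γ (k+1) * (2 * |φ (k+1) - t|) := by
          rw [Finset.sum_range_succ']; ring
      _ ≤ 8 * π * γ 0 + 2 * B := by
          have e1 : γ 0 * (2 * |φ 0 - t|) ≤ 8 * π * γ 0 := by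
            nlinarith [hφbd 0, (hγ 0).le, abs_nonneg (φ 0 - t)]
          have e2 : ∑ k ∈ Finset.range n, γ (k+1) * (2 * |φ (k+1) - t|) = 2 * B := by
            rw [hB, Finset.mul_sum]
            exact Finset.sum_congr rfl fun k _ => by ring
          rw [e2]
          linarith
  have hγn := gamma_head_le γ n
  have hπ : 0 < π := Real.pi_pos
  have hsplit : ∑ k ∈ Finset.range n,
      (|γ (k + 1) - γ k| + γ (k + 1) * |φ (k + 1) - t|) = A + B := by
    rw [hA, hB, Finset.sum_add_distrib]
  rw [hsplit]
  calc ‖1 - Complex.exp (-(Complex.I * t))‖ *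
        ‖∑ k ∈ Finset.range (n + 1), (γ k : ℂ) * E (k+1)‖
      = ‖(1 - Complex.exp (-(Complex.I * t))) *
          ∑ k ∈ Finset.range (n+1), (γ k : ℂ) * E (k+1)‖ := (norm_mul _ _).symm
    _ ≤ γ n + γ 0 + A + (8 * π * γ 0 + 2 * B) := by
        rw [hid]; exact (norm_add_le _ _).trans (add_le_add hS1 hS2)
    _ ≤ (2 + 8 * π) * (γ 0 + (A + B)) := by nlinarith [(hγ 0).le]

noncomputable section

/-- Lemma 9 of the paper. Bounds and uniform vanishing of oscillatory sums
`∑_{k=0}^n γ_k exp(i ∑_{j=0}^k θ_j(x))`. -/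
theorem oscillatory_sum_bound_and_vanishing
    {d : ℕ} (K : Set (EuclideanSpace ℝ (Fin d))) (hK : IsCompact K)
    (γ : ℕ → ℝ) (hγ : ∀ k, 0 < γ k)
    (θseq : ℕ → EuclideanSpace ℝ (Fin d) → ℝ) (θ : EuclideanSpace ℝ (Fin d) → ℝ)
    (hθcont : ∀ k, ContinuousOn (θseq k) K)
    (hθrange : ∀ k, ∀ x ∈ K, θseq k x ∈ Set.Ioo 0 (2 * π))
    (hθrange' : ∀ x ∈ K, θ x ∈ Set.Ioo 0 (2 * π))
    (hconv : TendstoUniformlyOn θseq θ atTop K) :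
    (∃ c > 0, ∀ x ∈ K, ∀ n : ℕ,
      ‖∑ k ∈ Finset.range (n + 1), (γ k : ℂ) *
          Complex.exp (Complex.I * ((∑ j ∈ Finset.range (k + 1), θseq j x : ℝ) : ℂ))‖ ≤
        c * (γ 0 + ∑ k ∈ Finset.range n,
          (|γ (k + 1) - γ k| + γ (k + 1) * |θseq (k + 1) x - θ x|))) ∧
    ((Tendsto (fun n => ∑ k ∈ Finset.range n, γ k) atTop atTop ∧
        Tendsto (fun n => γ (n - 1) / γ n) atTop (𝓝 1)) →
      TendstoUniformlyOn
        (fun n x => ((∑ j ∈ Finset.range (n + 1), γ j : ℝ) : ℂ)⁻¹ *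
          ∑ k ∈ Finset.range (n + 1), (γ k : ℂ) *
            Complex.exp (Complex.I * ((∑ j ∈ Finset.range (k + 1), θseq j x : ℝ) : ℂ)))
        (fun _ => 0) atTop K) := by
  rcases K.eq_empty_or_nonempty with hKe | hKne
  · subst hKe
    exact ⟨⟨1, one_pos, fun x hx => absurd hx (Set.notMem_empty x)⟩,
      fun _ => tendstoUniformlyOn_empty⟩
  have hπ : (0:ℝ) < π := Real.pi_pos
  have hθbd : ∀ x ∈ K, ∀ k, |θseq k x - θ x| ≤ 4 * π := by
    intro x hx k
    obtain ⟨a1, a2⟩ := hθrange k x hx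
    obtain ⟨b1, b2⟩ := hθrange' x hx
    rw [abs_sub_le_iff]
    constructor <;> linarith
  have hθc : ContinuousOn θ K := hconv.continuousOn (Filter.Eventually.of_forall hθcont).frequently
  have hDcont : ContinuousOn (fun x => ‖1 - Complex.exp (-(Complex.I * θ x))‖) K := by
    apply ContinuousOn.norm
    apply ContinuousOn.sub continuousOn_const
    apply Complex.continuous_exp.comp_continuousOn
    exact (continuousOn_const.mul (Complex.continuous_ofReal.comp_continuousOn hθc)).neg
  have hDpos : ∀ x ∈ K, 0 < ‖1 - Complex.exp (-(Complex.I * θ x))‖ := by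
    intro x hx
    rw [norm_pos_iff]
    intro h
    have h1 : Complex.exp (-(Complex.I * θ x)) = 1 := (sub_eq_zero.mp h).symm
    have e : -(Complex.I * (θ x : ℂ)) = ((-θ x : ℝ) : ℂ) * Complex.I := by push_cast; ring
    rw [e] at h1
    have h2 : Real.cos (-θ x) = 1 := by
      have := congrArg Complex.re h1
      rwa [Complex.exp_ofReal_mul_I_re] at this
    rw [Real.cos_neg] at h2
    obtain ⟨b1, b2⟩ := hθrange' x hx
    have := (Real.cos_eq_one_iff_of_lt_of_lt (by linarith) b2).mp h2
    linarith
  obtain ⟨x₀, hx₀K, hx₀min⟩ := hK.exists_isMinOn hKne hDcont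
  have hm : 0 < ‖1 - Complex.exp (-(Complex.I * θ x₀))‖ := hDpos x₀ hx₀K
  have hmle : ∀ x ∈ K, ‖1 - Complex.exp (-(Complex.I * θ x₀))‖ ≤
      ‖1 - Complex.exp (-(Complex.I * θ x))‖ := fun x hx => hx₀min hx
  set m := ‖1 - Complex.exp (-(Complex.I * θ x₀))‖ with hmdef
  have hc : 0 < (2 + 8 * π) / m := by positivity
  have key : ∀ x ∈ K, ∀ n : ℕ,
      ‖∑ k ∈ Finset.range (n + 1), (γ k : ℂ) *
          Complex.exp (Complex.I * ((∑ j ∈ Finset.range (k + 1), θseq j x : ℝ) : ℂ))‖ ≤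
        ((2 + 8 * π) / m) * (γ 0 + ∑ k ∈ Finset.range n,
          (|γ (k + 1) - γ k| + γ (k + 1) * |θseq (k + 1) x - θ x|)) := by
    intro x hx n
    have hb := pointwise_bound γ hγ (fun j => θseq j x) (θ x) (fun k => hθbd x hx k) n
    have h1 : m * ‖∑ k ∈ Finset.range (n + 1), (γ k : ℂ) *
          Complex.exp (Complex.I * ((∑ j ∈ Finset.range (k + 1), θseq j x : ℝ) : ℂ))‖ ≤
        (2 + 8 * π) * (γ 0 + ∑ k ∈ Finset.range n,
          (|γ (k + 1) - γ k| + γ (k + 1) * |θseq (k + 1) x - θ x|)) :=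
      le_trans (mul_le_mul_of_nonneg_right (hmle x hx) (norm_nonneg _)) hb
    rw [div_mul_eq_mul_div, le_div_iff₀ hm]
    linarith
  refine ⟨⟨(2 + 8 * π) / m, hc, key⟩, ?_⟩
  rintro ⟨hdiv, hrat⟩
  have hG : ∀ n : ℕ, 0 < ∑ j ∈ Finset.range (n + 1), γ j :=
    fun n => Finset.sum_pos (fun i _ => hγ i) Finset.nonempty_range_add_one
  have hGtop : Tendsto (fun n => ∑ j ∈ Finset.range (n + 1), γ j) atTop atTop :=
    hdiv.comp (tendsto_add_atTop_nat 1)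
  have hrat' : Tendsto (fun k => γ k / γ (k + 1)) atTop (𝓝 1) := by
    have := hrat.comp (tendsto_add_atTop_nat 1)
    simpa [Function.comp_def] using this
  rw [Metric.tendstoUniformlyOn_iff]
  intro ε hε
  set c := (2 + 8 * π) / m with hcdef
  set ε' := ε / (4 * c) with hε'def
  have hε' : 0 < ε' := by positivity
  have h1 : ∀ᶠ k in atTop, |γ k / γ (k + 1) - 1| < ε' := by
    have := hrat'.eventually (Metric.ball_mem_nhds (1:ℝ) hε')
    simpa [Real.dist_eq] using this
  obtain ⟨N1, hN1⟩ := Filter.eventually_atTop.mp h1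
  rw [Metric.tendstoUniformlyOn_iff] at hconv
  obtain ⟨N2, hN2⟩ := Filter.eventually_atTop.mp (hconv ε' hε')
  set N := max N1 N2 with hNdef
  set CA := ∑ k ∈ Finset.range N, |γ (k + 1) - γ k| with hCA
  set CB := ∑ k ∈ Finset.range N, γ (k + 1) * (4 * π) with hCB
  -- the per-(n,x) estimate for n ≥ N
  have hmain : ∀ n, N ≤ n → ∀ x ∈ K,
      γ 0 + ∑ k ∈ Finset.range n, (|γ (k + 1) - γ k| + γ (k + 1) * |θseq (k + 1) x - θ x|)
        ≤ γ 0 + CA + CB + 2 * ε' * ∑ j ∈ Finset.range (n + 1), γ j := by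
    intro n hn x hx
    have hsplit : ∑ k ∈ Finset.range n,
        (|γ (k + 1) - γ k| + γ (k + 1) * |θseq (k + 1) x - θ x|)
        = ∑ k ∈ Finset.range N, (|γ (k + 1) - γ k| + γ (k + 1) * |θseq (k + 1) x - θ x|)
          + ∑ k ∈ Finset.Ico N n, (|γ (k + 1) - γ k| + γ (k + 1) * |θseq (k + 1) x - θ x|) := by
      simp only [Finset.range_eq_Ico]
      exact (Finset.sum_Ico_consecutive _ (Nat.zero_le N) hn).symm
    have hhead : ∑ k ∈ Finset.range N,
        (|γ (k + 1) - γ k| + γ (k + 1) * |θseq (k + 1) x - θ x|) ≤ CA + CB := by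
      rw [hCA, hCB, ← Finset.sum_add_distrib]
      refine Finset.sum_le_sum fun k _ => ?_
      have := hθbd x hx (k + 1)
      have := (hγ (k + 1)).le
      nlinarith
    have htail : ∑ k ∈ Finset.Ico N n,
        (|γ (k + 1) - γ k| + γ (k + 1) * |θseq (k + 1) x - θ x|)
        ≤ 2 * ε' * ∑ j ∈ Finset.range (n + 1), γ j := by
      have hterm : ∀ k ∈ Finset.Ico N n,
          |γ (k + 1) - γ k| + γ (k + 1) * |θseq (k + 1) x - θ x|
            ≤ 2 * ε' * γ (k + 1) := by
        intro k hk
        obtain ⟨hk1, _⟩ := Finset.mem_Ico.mp hk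
        have hkN1 : N1 ≤ k := le_trans (le_max_left _ _) hk1
        have hkN2 : N2 ≤ k + 1 := le_trans (le_trans (le_max_right _ _) hk1) (Nat.le_succ k)
        have hp := hγ (k + 1)
        have ha : |γ (k + 1) - γ k| ≤ ε' * γ (k + 1) := by
          have hq := hN1 k hkN1
          have e : γ k - γ (k + 1) = (γ k / γ (k + 1) - 1) * γ (k + 1) := by field_simp
          rw [abs_sub_comm, e, abs_mul, abs_of_pos hp]
          exact mul_le_mul_of_nonneg_right hq.le hp.le
        have hb' : |θseq (k + 1) x - θ x| ≤ ε' := by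
          have := hN2 (k + 1) hkN2 x hx
          rw [dist_comm, Real.dist_eq] at this
          exact this.le
        nlinarith
      calc ∑ k ∈ Finset.Ico N n,
            (|γ (k + 1) - γ k| + γ (k + 1) * |θseq (k + 1) x - θ x|)
          ≤ ∑ k ∈ Finset.Ico N n, 2 * ε' * γ (k + 1) := Finset.sum_le_sum hterm
        _ ≤ ∑ k ∈ Finset.range n, 2 * ε' * γ (k + 1) := by
            refine Finset.sum_le_sum_of_subset_of_nonneg ?_ fun k _ _ =>
              mul_nonneg (mul_nonneg (by norm_num) hε'.le) (hγ _).le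
            rw [Finset.range_eq_Ico]
            exact Finset.Ico_subset_Ico (Nat.zero_le N) le_rfl
        _ = 2 * ε' * ∑ k ∈ Finset.range n, γ (k + 1) := by rw [Finset.mul_sum]
        _ ≤ 2 * ε' * ∑ j ∈ Finset.range (n + 1), γ j := by
            have : ∑ j ∈ Finset.range (n + 1), γ j
                = (∑ k ∈ Finset.range n, γ (k + 1)) + γ 0 := Finset.sum_range_succ' γ n
            have h0 := (hγ 0).le
            nlinarith [hε'.le]
    rw [hsplit]
    linarith
  have hev : ∀ᶠ n in atTop,
      c * (γ 0 + CA + CB) / (∑ j ∈ Finset.range (n + 1), γ j) < ε / 2 := by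
    have : Tendsto (fun n => c * (γ 0 + CA + CB) / (∑ j ∈ Finset.range (n + 1), γ j))
        atTop (𝓝 0) := Tendsto.div_atTop tendsto_const_nhds hGtop
    exact this.eventually_lt_const (half_pos hε)
  filter_upwards [hev, Filter.eventually_ge_atTop N] with n h1' h2' x hx
  rw [dist_eq_norm, zero_sub, norm_neg, norm_mul, norm_inv, Complex.norm_real,
    Real.norm_eq_abs, abs_of_pos (hG n)]
  have hkey := key x hx n
  have hb := hmain n h2' x hx
  have hGn := hG n
  have hSb : ‖∑ k ∈ Finset.range (n + 1), (γ k : ℂ) *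
        Complex.exp (Complex.I * ((∑ j ∈ Finset.range (k + 1), θseq j x : ℝ) : ℂ))‖
      ≤ c * (γ 0 + CA + CB) + 2 * c * ε' * ∑ j ∈ Finset.range (n + 1), γ j := by
    calc ‖∑ k ∈ Finset.range (n + 1), (γ k : ℂ) *
          Complex.exp (Complex.I * ((∑ j ∈ Finset.range (k + 1), θseq j x : ℝ) : ℂ))‖
        ≤ c * (γ 0 + ∑ k ∈ Finset.range n,
            (|γ (k + 1) - γ k| + γ (k + 1) * |θseq (k + 1) x - θ x|)) := hkey
      _ ≤ c * (γ 0 + CA + CB + 2 * ε' * ∑ j ∈ Finset.range (n + 1), γ j) := by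
          have hc0 : (0:ℝ) ≤ c := hc.le
          nlinarith
      _ = c * (γ 0 + CA + CB) + 2 * c * ε' * ∑ j ∈ Finset.range (n + 1), γ j := by ring
  have h2cε : 2 * c * ε' = ε / 2 := by
    rw [hε'def]
    field_simp
    ring
  calc (∑ j ∈ Finset.range (n + 1), γ j)⁻¹ *
        ‖∑ k ∈ Finset.range (n + 1), (γ k : ℂ) *
          Complex.exp (Complex.I * ((∑ j ∈ Finset.range (k + 1), θseq j x : ℝ) : ℂ))‖
      ≤ (∑ j ∈ Finset.range (n + 1), γ j)⁻¹ *
        (c * (γ 0 + CA + CB) + 2 * c * ε' * ∑ j ∈ Finset.range (n + 1), γ j) := by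
        gcongr
    _ = c * (γ 0 + CA + CB) / (∑ j ∈ Finset.range (n + 1), γ j) + 2 * c * ε' := by
        field_simp
    _ < ε / 2 + ε / 2 := by rw [h2cε]; exact add_lt_add_of_lt_of_le h1' le_rfl
    _ = ε := add_halves ε
end
end

section
/- Suppose the Jacobi parameters (a_n), (b_n) are asymptotically N-periodic. Then for each i ∈ {0, 1, …, N−1} and each n ≥ 0, as k → ∞: (a) p_n^{[kN+i]}(x) → 𝔭_n^{[i]}(x); (b) (a_{kN+i}/α_i) · (p_n^{[kN+i]})′(x) → (𝔭_n^{[i]})′(x); (c) (a_{kN+i}/α_i)² · (p_n^{[kN+i]})″(x) → (𝔭_n^{[i]})″(x); in each case locally uniformly with respect to x ∈ ℂ. -/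
open Filter Topology

noncomputable section

/-- The `k`-th associated orthonormal polynomials `p_n^{[k]}` (as entire functions on `ℂ`)
built from the Jacobi parameters `(a_n)`, `(b_n)`. -/
def assocP (a b : ℕ → ℝ) (k : ℕ) : ℕ → ℂ → ℂ
  | 0 => fun _ => 1
  | 1 => fun x => (x - (b k : ℂ)) / (a k : ℂ)
  | (n + 2) => fun x =>
      ((x - (b (n + 1 + k) : ℂ)) * assocP a b k (n + 1) x -
        (a (n + k) : ℂ) * assocP a b k n x) / (a (n + 1 + k) : ℂ)

/-- The polynomials `𝔭_n^{[k]}` built from the periodic sequences `(α_n)`, `(β_n)`. -/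
def frakP (α β : ℤ → ℝ) (k : ℤ) : ℕ → ℂ → ℂ
  | 0 => fun _ => 1
  | 1 => fun x => (x - (β k : ℂ)) / (α k : ℂ)
  | (n + 2) => fun x =>
      ((x - (β ((n : ℤ) + 1 + k) : ℂ)) * frakP α β k (n + 1) x -
        (α ((n : ℤ) + k) : ℂ) * frakP α β k n x) / (α ((n : ℤ) + 1 + k) : ℂ)

private lemma periodic_shift {γ : ℤ → ℝ} {N : ℕ} (hper : ∀ n : ℤ, γ (n + N) = γ n) :
    ∀ (k : ℕ) (m : ℤ), γ (m + (k : ℤ) * N) = γ m := by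
  intro k
  induction k with
  | zero => intro m; simp
  | succ k ih =>
    intro m
    rw [show ((k + 1 : ℕ) : ℤ) = (k : ℤ) + 1 by push_cast; ring,
      show m + ((k : ℤ) + 1) * N = (m + (k : ℤ) * N) + N by ring, hper, ih]

private lemma coeff_tendsto {c : ℕ → ℝ} {γ : ℤ → ℝ} {N : ℕ} (hN : 0 < N)
    (hper : ∀ n : ℤ, γ (n + N) = γ n)
    (h : Tendsto (fun n : ℕ => |c n - γ (n : ℤ)|) atTop (𝓝 0)) (m : ℕ) :
    Tendsto (fun k : ℕ => c (k * N + m)) atTop (𝓝 (γ (m : ℤ))) := by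
  have h1 : Tendsto (fun k : ℕ => k * N + m) atTop atTop := by
    apply tendsto_atTop_atTop.mpr
    intro bd
    refine ⟨bd, fun k hk => ?_⟩
    calc bd ≤ k := hk
      _ ≤ k * N := Nat.le_mul_of_pos_right k hN
      _ ≤ k * N + m := Nat.le_add_right _ _
  have h2 := h.comp h1
  rw [tendsto_iff_norm_sub_tendsto_zero]
  simp only [Real.norm_eq_abs]
  exact h2.congr fun k => by
    rw [Function.comp_apply,
      show ((k * N + m : ℕ) : ℤ) = (m : ℤ) + (k : ℤ) * N by push_cast; ring,
      periodic_shift hper]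

private lemma assocP_differentiable (a b : ℕ → ℝ) (k : ℕ) :
    ∀ n, Differentiable ℂ (assocP a b k n) := by
  have key : ∀ n, Differentiable ℂ (assocP a b k n) ∧
      Differentiable ℂ (assocP a b k (n + 1)) := by
    intro n
    induction n with
    | zero =>
      constructor
      · simp only [assocP]; exact differentiable_const _
      · show Differentiable ℂ (assocP a b k 1)
        simp only [assocP]
        exact (differentiable_fun_id.sub_const _).div_const _
    | succ n ih =>
      refine ⟨ih.2, ?_⟩
      show Differentiable ℂ (assocP a b k (n + 2))
      simp only [assocP]
      exact (((differentiable_fun_id.sub_const _).mul ih.2).sub (ih.1.const_mul _)).div_const _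
  exact fun n => (key n).1

private lemma frakP_differentiable (α β : ℤ → ℝ) (k : ℤ) :
    ∀ n, Differentiable ℂ (frakP α β k n) := by
  have key : ∀ n, Differentiable ℂ (frakP α β k n) ∧
      Differentiable ℂ (frakP α β k (n + 1)) := by
    intro n
    induction n with
    | zero =>
      constructor
      · simp only [frakP]; exact differentiable_const _
      · show Differentiable ℂ (frakP α β k 1)
        simp only [frakP]
        exact (differentiable_fun_id.sub_const _).div_const _
    | succ n ih =>
      refine ⟨ih.2, ?_⟩
      show Differentiable ℂ (frakP α β k (n + 2))
      simp only [frakP]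
      exact (((differentiable_fun_id.sub_const _).mul ih.2).sub (ih.1.const_mul _)).div_const _
  exact fun n => (key n).1

private lemma deriv_differentiable {g : ℂ → ℂ} (hg : Differentiable ℂ g) :
    Differentiable ℂ (deriv g) :=
  ((contDiff_infty_iff_deriv.mp hg.contDiff).2).differentiable (by simp)

/-- Proposition 2 of the paper. For asymptotically `N`-periodic Jacobi
parameters, `p_n^{[kN+i]}` and its (suitably rescaled) first two derivatives converge
locally uniformly on `ℂ` to `𝔭_n^{[i]}` and its derivatives. -/
theorem assoc_polynomials_tendsto_of_asymptotically_periodic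
    (N : ℕ) (hN : 0 < N) (a b : ℕ → ℝ) (ha : ∀ n, 0 < a n)
    (α β : ℤ → ℝ) (hα : ∀ n, 0 < α n)
    (hαper : ∀ n : ℤ, α (n + N) = α n) (hβper : ∀ n : ℤ, β (n + N) = β n)
    (hasym_a : Tendsto (fun n : ℕ => |a n - α (n : ℤ)|) atTop (𝓝 0))
    (hasym_b : Tendsto (fun n : ℕ => |b n - β (n : ℤ)|) atTop (𝓝 0))
    (i : ℕ) (hi : i < N) (n : ℕ) :
    TendstoLocallyUniformly
      (fun (k : ℕ) (x : ℂ) => assocP a b (k * N + i) n x)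
      (fun x : ℂ => frakP α β (i : ℤ) n x) atTop ∧
    TendstoLocallyUniformly
      (fun (k : ℕ) (x : ℂ) =>
        ((a (k * N + i) / α (i : ℤ) : ℝ) : ℂ) * deriv (assocP a b (k * N + i) n) x)
      (fun x : ℂ => deriv (frakP α β (i : ℤ) n) x) atTop ∧
    TendstoLocallyUniformly
      (fun (k : ℕ) (x : ℂ) =>
        ((a (k * N + i) / α (i : ℤ) : ℝ) : ℂ) ^ 2 *
          deriv (deriv (assocP a b (k * N + i) n)) x)
      (fun x : ℂ => deriv (deriv (frakP α β (i : ℤ) n)) x) atTop := by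
  -- real coefficient limits
  have hAr : ∀ m : ℕ, Tendsto (fun k : ℕ => a (k * N + m)) atTop (𝓝 (α (m : ℤ))) :=
    fun m => coeff_tendsto hN hαper hasym_a m
  have hBr : ∀ m : ℕ, Tendsto (fun k : ℕ => b (k * N + m)) atTop (𝓝 (β (m : ℤ))) :=
    fun m => coeff_tendsto hN hβper hasym_b m
  -- complex coefficient limits
  have hAc : ∀ m : ℕ, Tendsto (fun k : ℕ => ((a (k * N + m) : ℝ) : ℂ)) atTop
      (𝓝 ((α (m : ℤ) : ℝ) : ℂ)) :=
    fun m => (Complex.continuous_ofReal.tendsto _).comp (hAr m)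
  have hBc : ∀ m : ℕ, Tendsto (fun k : ℕ => ((b (k * N + m) : ℝ) : ℂ)) atTop
      (𝓝 ((β (m : ℤ) : ℝ) : ℂ)) :=
    fun m => (Complex.continuous_ofReal.tendsto _).comp (hBr m)
  have hAne : ∀ m : ℤ, ((α m : ℝ) : ℂ) ≠ 0 :=
    fun m => Complex.ofReal_ne_zero.mpr (hα m).ne'
  have hdF : ∀ k n, Differentiable ℂ (assocP a b (k * N + i) n) :=
    fun k => assocP_differentiable a b _
  have hdG : ∀ n, Differentiable ℂ (frakP α β (i : ℤ) n) := frakP_differentiable α β _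
  set F : ℕ → ℕ → C(ℂ, ℂ) := fun k n => ⟨assocP a b (k * N + i) n, (hdF k n).continuous⟩
    with hFdef
  set G : ℕ → C(ℂ, ℂ) := fun n => ⟨frakP α β (i : ℤ) n, (hdG n).continuous⟩ with hGdef
  have hconst : Continuous (ContinuousMap.const ℂ : ℂ → C(ℂ, ℂ)) :=
    ContinuousMap.continuous_const'
  -- main induction
  have key : ∀ n, Tendsto (fun k => F k n) atTop (𝓝 (G n)) := by
    have key2 : ∀ n, Tendsto (fun k => F k n) atTop (𝓝 (G n)) ∧
        Tendsto (fun k => F k (n + 1)) atTop (𝓝 (G (n + 1))) := by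
      intro n
      induction n with
      | zero =>
        constructor
        · have e : ∀ k, F k 0 = G 0 := fun k => ContinuousMap.ext fun x => rfl
          simp only [e]
          exact tendsto_const_nhds
        · have h1 : Tendsto
              (fun k => ContinuousMap.const ℂ (((a (k * N + i) : ℝ) : ℂ))⁻¹ *
                (ContinuousMap.id ℂ - ContinuousMap.const ℂ ((b (k * N + i) : ℝ) : ℂ)))
              atTop
              (𝓝 (ContinuousMap.const ℂ (((α (i : ℤ) : ℝ) : ℂ))⁻¹ *
                (ContinuousMap.id ℂ - ContinuousMap.const ℂ ((β (i : ℤ) : ℝ) : ℂ)))) :=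
            ((hconst.tendsto _).comp ((hAc i).inv₀ (hAne i))).mul
              (tendsto_const_nhds.sub ((hconst.tendsto _).comp (hBc i)))
          have e1 : ∀ k, ContinuousMap.const ℂ (((a (k * N + i) : ℝ) : ℂ))⁻¹ *
              (ContinuousMap.id ℂ - ContinuousMap.const ℂ ((b (k * N + i) : ℝ) : ℂ)) =
              F k (0 + 1) := fun k => ContinuousMap.ext fun x => by
            show _ * (x - _) = assocP a b (k * N + i) 1 x
            simp only [assocP]
            rw [div_eq_inv_mul]
            rfl
          have e2 : ContinuousMap.const ℂ (((α (i : ℤ) : ℝ) : ℂ))⁻¹ *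
              (ContinuousMap.id ℂ - ContinuousMap.const ℂ ((β (i : ℤ) : ℝ) : ℂ)) =
              G (0 + 1) := ContinuousMap.ext fun x => by
            show _ * (x - _) = frakP α β (i : ℤ) 1 x
            simp only [frakP]
            rw [div_eq_inv_mul]
            rfl
          have h2 := h1.congr e1
          rwa [e2] at h2
      | succ n ih =>
        refine ⟨ih.2, ?_⟩
        have h1 : Tendsto
            (fun k => ContinuousMap.const ℂ (((a (k * N + (n + 1 + i)) : ℝ) : ℂ))⁻¹ *
              ((ContinuousMap.id ℂ -
                  ContinuousMap.const ℂ ((b (k * N + (n + 1 + i)) : ℝ) : ℂ)) * F k (n + 1) -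
                ContinuousMap.const ℂ ((a (k * N + (n + i)) : ℝ) : ℂ) * F k n))
            atTop
            (𝓝 (ContinuousMap.const ℂ (((α ((n + 1 + i : ℕ) : ℤ) : ℝ) : ℂ))⁻¹ *
              ((ContinuousMap.id ℂ -
                  ContinuousMap.const ℂ ((β ((n + 1 + i : ℕ) : ℤ) : ℝ) : ℂ)) * G (n + 1) -
                ContinuousMap.const ℂ ((α ((n + i : ℕ) : ℤ) : ℝ) : ℂ) * G n))) :=
          ((hconst.tendsto _).comp ((hAc (n + 1 + i)).inv₀ (hAne _))).mul
            (((tendsto_const_nhds.sub ((hconst.tendsto _).comp (hBc (n + 1 + i)))).mul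
                ih.2).sub
              (((hconst.tendsto _).comp (hAc (n + i))).mul ih.1))
        have e1 : ∀ k, ContinuousMap.const ℂ (((a (k * N + (n + 1 + i)) : ℝ) : ℂ))⁻¹ *
            ((ContinuousMap.id ℂ -
                ContinuousMap.const ℂ ((b (k * N + (n + 1 + i)) : ℝ) : ℂ)) * F k (n + 1) -
              ContinuousMap.const ℂ ((a (k * N + (n + i)) : ℝ) : ℂ) * F k n) =
            F k (n + 1 + 1) := fun k => ContinuousMap.ext fun x => by
          show _ = assocP a b (k * N + i) (n + 2) x
          simp only [assocP]
          rw [show n + 1 + (k * N + i) = k * N + (n + 1 + i) by ring,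
            show n + (k * N + i) = k * N + (n + i) by ring, div_eq_inv_mul]
          rfl
        have e2 : ContinuousMap.const ℂ (((α ((n + 1 + i : ℕ) : ℤ) : ℝ) : ℂ))⁻¹ *
            ((ContinuousMap.id ℂ -
                ContinuousMap.const ℂ ((β ((n + 1 + i : ℕ) : ℤ) : ℝ) : ℂ)) * G (n + 1) -
              ContinuousMap.const ℂ ((α ((n + i : ℕ) : ℤ) : ℝ) : ℂ) * G n) =
            G (n + 1 + 1) := ContinuousMap.ext fun x => by
          show _ = frakP α β (i : ℤ) (n + 2) x
          simp only [frakP]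
          rw [show ((n + 1 + i : ℕ) : ℤ) = (n : ℤ) + 1 + (i : ℤ) by push_cast; ring,
            show ((n + i : ℕ) : ℤ) = (n : ℤ) + (i : ℤ) by push_cast; ring, div_eq_inv_mul]
          rfl
        have h2 := h1.congr e1
        rwa [e2] at h2
    exact fun n => (key2 n).1
  -- part (a)
  have hpa : TendstoLocallyUniformly
      (fun (k : ℕ) (x : ℂ) => assocP a b (k * N + i) n x)
      (fun x : ℂ => frakP α β (i : ℤ) n x) atTop :=
    ContinuousMap.tendsto_iff_tendstoLocallyUniformly.mp (key n)
  -- derivative convergence (unscaled)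
  have hd1 : TendstoLocallyUniformly
      (fun (k : ℕ) (x : ℂ) => deriv (assocP a b (k * N + i) n) x)
      (fun x : ℂ => deriv (frakP α β (i : ℤ) n) x) atTop := by
    have h0 := tendstoLocallyUniformlyOn_univ.mpr hpa
    have h1 := h0.deriv (Eventually.of_forall fun k => (hdF k n).differentiableOn)
      isOpen_univ
    exact tendstoLocallyUniformlyOn_univ.mp h1
  have hd2 : TendstoLocallyUniformly
      (fun (k : ℕ) (x : ℂ) => deriv (deriv (assocP a b (k * N + i) n)) x)
      (fun x : ℂ => deriv (deriv (frakP α β (i : ℤ) n)) x) atTop := by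
    have h0 := tendstoLocallyUniformlyOn_univ.mpr hd1
    have h1 := h0.deriv
      (Eventually.of_forall fun k => (deriv_differentiable (hdF k n)).differentiableOn)
      isOpen_univ
    exact tendstoLocallyUniformlyOn_univ.mp h1
  -- the scaling factor tends to 1
  have hc : Tendsto (fun k : ℕ => ((a (k * N + i) / α (i : ℤ) : ℝ) : ℂ)) atTop (𝓝 1) := by
    have h1 : Tendsto (fun k : ℕ => a (k * N + i) / α (i : ℤ)) atTop (𝓝 1) := by
      have := (hAr i).div_const (α (i : ℤ))
      rwa [div_self (hα (i : ℤ)).ne'] at this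
    have h2 := (Complex.continuous_ofReal.tendsto _).comp h1
    rw [Complex.ofReal_one] at h2
    exact h2
  -- scaling lemma
  have scale : ∀ (c : ℕ → ℂ), Tendsto c atTop (𝓝 1) →
      ∀ (P : ℕ → ℂ → ℂ) (f : ℂ → ℂ), (∀ k, Continuous (P k)) → Continuous f →
      TendstoLocallyUniformly P f atTop →
      TendstoLocallyUniformly (fun k x => c k * P k x) f atTop := by
    intro c hctend P f hPc hfc h
    have h' : Tendsto (fun k => (⟨P k, hPc k⟩ : C(ℂ, ℂ))) atTop (𝓝 ⟨f, hfc⟩) :=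
      ContinuousMap.tendsto_iff_tendstoLocallyUniformly.mpr h
    have h2 : Tendsto
        (fun k => ContinuousMap.const ℂ (c k) * (⟨P k, hPc k⟩ : C(ℂ, ℂ))) atTop
        (𝓝 (ContinuousMap.const ℂ 1 * (⟨f, hfc⟩ : C(ℂ, ℂ)))) :=
      ((hconst.tendsto _).comp hctend).mul h'
    rw [show ContinuousMap.const ℂ (1 : ℂ) * (⟨f, hfc⟩ : C(ℂ, ℂ)) = ⟨f, hfc⟩ from
      ContinuousMap.ext fun x => one_mul _] at h2
    exact ContinuousMap.tendsto_iff_tendstoLocallyUniformly.mp h2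
  refine ⟨hpa, ?_, ?_⟩
  · exact scale _ hc _ _ (fun k => (deriv_differentiable (hdF k n)).continuous)
      (deriv_differentiable (hdG n)).continuous hd1
  · have hc2 : Tendsto (fun k : ℕ => ((a (k * N + i) / α (i : ℤ) : ℝ) : ℂ) ^ 2) atTop
        (𝓝 1) := by simpa using hc.pow 2
    exact scale _ hc2 _ _
      (fun k => (deriv_differentiable (deriv_differentiable (hdF k n))).continuous)
      (deriv_differentiable (deriv_differentiable (hdG n))).continuous hd2

end
end

section
/- Suppose the Jacobi parameters (a_n), (b_n) are N-periodically modulated. Then for each i ∈ {0, 1, …, N−1} and each n ≥ 0, as k → ∞: (a) p_n^{[kN+i]}(x) → 𝔭_n^{[i]}(0); (b) (a_{kN+i}/α_i) · (p_n^{[kN+i]})′(x) → (𝔭_n^{[i]})′(0); (c) (a_{kN+i}/α_i)² · (p_n^{[kN+i]})″(x) → (𝔭_n^{[i]})″(0); in each case locally uniformly with respect to x ∈ ℂ. -/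
open Filter Topology

noncomputable section

namespace JacobiAux7

def genP (A B : ℕ → ℂ) : ℕ → ℂ → ℂ
  | 0 => fun _ => 1
  | 1 => fun x => (x - B 0) / A 0
  | (n + 2) => fun x =>
      ((x - B (n + 1)) * genP A B (n + 1) x - A n * genP A B n x) / A (n + 1)

def genPd (A B : ℕ → ℂ) : ℕ → ℂ → ℂ
  | 0 => fun _ => 0
  | 1 => fun _ => 1 / A 0
  | (n + 2) => fun x =>
      (genP A B (n + 1) x + (x - B (n + 1)) * genPd A B (n + 1) x -
        A n * genPd A B n x) / A (n + 1)

def genPdd (A B : ℕ → ℂ) : ℕ → ℂ → ℂ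
  | 0 => fun _ => 0
  | 1 => fun _ => 0
  | (n + 2) => fun x =>
      (2 * genPd A B (n + 1) x + (x - B (n + 1)) * genPdd A B (n + 1) x -
        A n * genPdd A B n x) / A (n + 1)

lemma genP_reg (A B : ℕ → ℂ) : ∀ n : ℕ,
    Differentiable ℂ (genP A B n) ∧ deriv (genP A B n) = genPd A B n ∧
    Differentiable ℂ (genPd A B n) ∧ deriv (genPd A B n) = genPdd A B n := by
  intro n
  induction n using Nat.twoStepInduction with
  | zero =>
    refine ⟨differentiable_const _, ?_, differentiable_const _, ?_⟩ <;>
      · funext x; simp [genP, genPd, genPdd]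
  | one =>
    refine ⟨(differentiable_id.sub_const _).div_const _, ?_, differentiable_const _, ?_⟩
    · funext x
      show deriv (fun x => (x - B 0) / A 0) x = 1 / A 0
      rw [deriv_div_const, deriv_sub_const, deriv_id'']
    · funext x; simp [genPd, genPdd]
  | more n ih1 ih2 =>
    obtain ⟨hp0, hd0, hp0', hd0'⟩ := ih1
    obtain ⟨hp1, hd1, hp1', hd1'⟩ := ih2
    have hx : Differentiable ℂ fun x : ℂ => x - B (n + 1) := differentiable_id.sub_const _
    have hP : Differentiable ℂ (genP A B (n + 2)) := by
      show Differentiable ℂ fun x =>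
        ((x - B (n + 1)) * genP A B (n + 1) x - A n * genP A B n x) / A (n + 1)
      exact ((hx.mul hp1).sub (hp0.const_mul _)).div_const _
    have hPd : Differentiable ℂ (genPd A B (n + 2)) := by
      show Differentiable ℂ fun x =>
        (genP A B (n + 1) x + (x - B (n + 1)) * genPd A B (n + 1) x -
          A n * genPd A B n x) / A (n + 1)
      exact ((hp1.add (hx.mul hp1')).sub (hp0'.const_mul _)).div_const _
    refine ⟨hP, ?_, hPd, ?_⟩
    · funext x
      show deriv (fun x =>
        ((x - B (n + 1)) * genP A B (n + 1) x - A n * genP A B n x) / A (n + 1)) x = _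
      rw [deriv_div_const, deriv_fun_sub ((hx x).fun_mul (hp1 x)) ((hp0 x).const_mul _),
        deriv_fun_mul (hx x) (hp1 x), deriv_const_mul _ (hp0 x), deriv_sub_const, deriv_id'']
      simp only [genPd, hd1, hd0, one_mul]
    · funext x
      show deriv (fun x =>
        (genP A B (n + 1) x + (x - B (n + 1)) * genPd A B (n + 1) x -
          A n * genPd A B n x) / A (n + 1)) x = _
      rw [deriv_div_const, deriv_fun_sub ((hp1 x).fun_add ((hx x).fun_mul (hp1' x))) ((hp0' x).const_mul _),
        deriv_fun_add (hp1 x) ((hx x).fun_mul (hp1' x)), deriv_fun_mul (hx x) (hp1' x),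
        deriv_const_mul _ (hp0' x), deriv_sub_const, deriv_id'']
      simp only [genPdd, hd1, hd1', hd0', one_mul]
      ring

lemma tluc_iff (f : ℕ → ℂ → ℂ) (c : ℂ) :
    TendstoLocallyUniformly f (fun _ : ℂ => c) atTop ↔
    ∀ K : Set ℂ, IsCompact K → ∀ ε : ℝ, 0 < ε →
      ∀ᶠ k in atTop, ∀ x ∈ K, ‖f k x - c‖ < ε := by
  rw [tendstoLocallyUniformly_iff_forall_isCompact]
  refine forall_congr' fun K => forall_congr' fun hK => ?_
  rw [Metric.tendstoUniformlyOn_iff]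
  simp only [gt_iff_lt, dist_eq_norm', Set.mem_setOf_eq]

lemma tluc_const {g : ℕ → ℂ} {c : ℂ} (h : Tendsto g atTop (𝓝 c)) :
    TendstoLocallyUniformly (fun k (_ : ℂ) => g k) (fun _ : ℂ => c) atTop := by
  rw [tluc_iff]
  intro K _ ε hε
  filter_upwards [Metric.tendsto_nhds.mp h ε hε] with k hk x _
  simpa [dist_eq_norm] using hk

lemma tluc_add {f g : ℕ → ℂ → ℂ} {c d : ℂ}
    (hf : TendstoLocallyUniformly f (fun _ : ℂ => c) atTop)
    (hg : TendstoLocallyUniformly g (fun _ : ℂ => d) atTop) :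
    TendstoLocallyUniformly (fun k x => f k x + g k x) (fun _ : ℂ => c + d) atTop := by
  rw [tluc_iff] at hf hg ⊢
  intro K hK ε hε
  filter_upwards [hf K hK (ε / 2) (by positivity), hg K hK (ε / 2) (by positivity)]
    with k h1 h2 x hx
  have e : f k x + g k x - (c + d) = (f k x - c) + (g k x - d) := by ring
  rw [e]
  calc ‖(f k x - c) + (g k x - d)‖ ≤ ‖f k x - c‖ + ‖g k x - d‖ := norm_add_le _ _
    _ < ε / 2 + ε / 2 := add_lt_add (h1 x hx) (h2 x hx)
    _ = ε := by ring

lemma tluc_sub {f g : ℕ → ℂ → ℂ} {c d : ℂ}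
    (hf : TendstoLocallyUniformly f (fun _ : ℂ => c) atTop)
    (hg : TendstoLocallyUniformly g (fun _ : ℂ => d) atTop) :
    TendstoLocallyUniformly (fun k x => f k x - g k x) (fun _ : ℂ => c - d) atTop := by
  rw [tluc_iff] at hf hg ⊢
  intro K hK ε hε
  filter_upwards [hf K hK (ε / 2) (by positivity), hg K hK (ε / 2) (by positivity)]
    with k h1 h2 x hx
  have e : f k x - g k x - (c - d) = (f k x - c) - (g k x - d) := by ring
  rw [e]
  calc ‖(f k x - c) - (g k x - d)‖ ≤ ‖f k x - c‖ + ‖g k x - d‖ := norm_sub_le _ _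
    _ < ε / 2 + ε / 2 := add_lt_add (h1 x hx) (h2 x hx)
    _ = ε := by ring

lemma tluc_mul {f g : ℕ → ℂ → ℂ} {c d : ℂ}
    (hf : TendstoLocallyUniformly f (fun _ : ℂ => c) atTop)
    (hg : TendstoLocallyUniformly g (fun _ : ℂ => d) atTop) :
    TendstoLocallyUniformly (fun k x => f k x * g k x) (fun _ : ℂ => c * d) atTop := by
  rw [tluc_iff] at hf hg ⊢
  intro K hK ε hε
  set S : ℝ := ‖c‖ + ‖d‖ + 2 with hS
  have hSpos : 0 < S := by positivity
  set δ : ℝ := min 1 (ε / S) with hδdef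
  have hδpos : 0 < δ := lt_min one_pos (by positivity)
  have hδ1 : δ ≤ 1 := min_le_left _ _
  have hδ2 : δ * S ≤ ε := by
    rw [← le_div_iff₀ hSpos]
    exact min_le_right _ _
  filter_upwards [hf K hK δ hδpos, hg K hK δ hδpos] with k h1 h2 x hx
  have e : f k x * g k x - c * d =
      (f k x - c) * (g k x - d) + (f k x - c) * d + c * (g k x - d) := by ring
  have hu := h1 x hx
  have hv := h2 x hx
  have hn : ‖f k x * g k x - c * d‖ ≤
      ‖f k x - c‖ * ‖g k x - d‖ + ‖f k x - c‖ * ‖d‖ + ‖c‖ * ‖g k x - d‖ := by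
    rw [e]
    calc ‖(f k x - c) * (g k x - d) + (f k x - c) * d + c * (g k x - d)‖
        ≤ ‖(f k x - c) * (g k x - d) + (f k x - c) * d‖ + ‖c * (g k x - d)‖ := norm_add_le _ _
      _ ≤ ‖(f k x - c) * (g k x - d)‖ + ‖(f k x - c) * d‖ + ‖c * (g k x - d)‖ := by
          gcongr; exact norm_add_le _ _
      _ = _ := by rw [norm_mul, norm_mul, norm_mul]
  have h0u : (0:ℝ) ≤ ‖f k x - c‖ := norm_nonneg _
  have h0v : (0:ℝ) ≤ ‖g k x - d‖ := norm_nonneg _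
  have h0c : (0:ℝ) ≤ ‖c‖ := norm_nonneg _
  have h0d : (0:ℝ) ≤ ‖d‖ := norm_nonneg _
  nlinarith [hn, hu, hv, hδpos, hδ1, hδ2, hSpos]

lemma tluc_xmul {g : ℕ → ℂ} (h : Tendsto g atTop (𝓝 0)) :
    TendstoLocallyUniformly (fun k (x : ℂ) => x * g k) (fun _ : ℂ => 0) atTop := by
  rw [tluc_iff]
  intro K hK ε hε
  obtain ⟨R, hR⟩ := hK.isBounded.subset_closedBall 0
  set R' : ℝ := max R 1 with hR'
  have hR'pos : 0 < R' := lt_of_lt_of_le one_pos (le_max_right _ _)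
  have hxb : ∀ x ∈ K, ‖x‖ ≤ R' := by
    intro x hx
    have := hR hx
    rw [Metric.mem_closedBall, dist_zero_right] at this
    exact this.trans (le_max_left _ _)
  filter_upwards [Metric.tendsto_nhds.mp h (ε / R') (by positivity)] with k hk x hx
  rw [dist_zero_right] at hk
  calc ‖x * g k - 0‖ = ‖x‖ * ‖g k‖ := by rw [sub_zero, norm_mul]
    _ ≤ R' * ‖g k‖ := mul_le_mul_of_nonneg_right (hxb x hx) (norm_nonneg _)
    _ < R' * (ε / R') := mul_lt_mul_of_pos_left hk hR'pos
    _ = ε := by field_simp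

lemma castT {f : ℕ → ℝ} {L : ℝ} (h : Tendsto f atTop (𝓝 L)) :
    Tendsto (fun k => ((f k : ℝ) : ℂ)) atTop (𝓝 (L : ℂ)) :=
  (Complex.continuous_ofReal.tendsto L).comp h

lemma gen_main (A B : ℕ → ℕ → ℝ) (𝒜 ℬ : ℕ → ℝ)
    (hApos : ∀ k m, 0 < A k m) (h𝒜 : ∀ m, 0 < 𝒜 m)
    (hA : ∀ m, Tendsto (fun k => A k m) atTop atTop)
    (hr : ∀ m, Tendsto (fun k => A k m / A k (m + 1)) atTop (𝓝 (𝒜 m / 𝒜 (m + 1))))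
    (hb : ∀ m, Tendsto (fun k => B k m / A k m) atTop (𝓝 (ℬ m / 𝒜 m))) : ∀ n : ℕ,
    TendstoLocallyUniformly
      (fun k x => genP (fun m => ((A k m : ℝ) : ℂ)) (fun m => ((B k m : ℝ) : ℂ)) n x)
      (fun _ : ℂ => genP (fun m => ((𝒜 m : ℝ) : ℂ)) (fun m => ((ℬ m : ℝ) : ℂ)) n 0) atTop ∧
    TendstoLocallyUniformly
      (fun k x => (((A k 0 : ℝ) : ℂ) / ((𝒜 0 : ℝ) : ℂ)) *
        genPd (fun m => ((A k m : ℝ) : ℂ)) (fun m => ((B k m : ℝ) : ℂ)) n x)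
      (fun _ : ℂ => genPd (fun m => ((𝒜 m : ℝ) : ℂ)) (fun m => ((ℬ m : ℝ) : ℂ)) n 0) atTop ∧
    TendstoLocallyUniformly
      (fun k x => (((A k 0 : ℝ) : ℂ) / ((𝒜 0 : ℝ) : ℂ)) ^ 2 *
        genPdd (fun m => ((A k m : ℝ) : ℂ)) (fun m => ((B k m : ℝ) : ℂ)) n x)
      (fun _ : ℂ => genPdd (fun m => ((𝒜 m : ℝ) : ℂ)) (fun m => ((ℬ m : ℝ) : ℂ)) n 0) atTop := by
  have h0m : ∀ m, Tendsto (fun k => A k 0 / A k m) atTop (𝓝 (𝒜 0 / 𝒜 m)) := by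
    intro m
    induction m with
    | zero =>
      have e : ∀ k, (1 : ℝ) = A k 0 / A k 0 := fun k => (div_self (hApos k 0).ne').symm
      rw [div_self (h𝒜 0).ne']
      exact Tendsto.congr e tendsto_const_nhds
    | succ m ih =>
      have e : ∀ k, (A k 0 / A k m) * (A k m / A k (m + 1)) = A k 0 / A k (m + 1) := by
        intro k
        have h1 := (hApos k m).ne'
        have h2 := (hApos k (m + 1)).ne'
        field_simp
      have e2 : (𝒜 0 / 𝒜 m) * (𝒜 m / 𝒜 (m + 1)) = 𝒜 0 / 𝒜 (m + 1) := by
        have h1 := (h𝒜 m).ne'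
        have h2 := (h𝒜 (m + 1)).ne'
        field_simp
      rw [← e2]
      exact Tendsto.congr e (ih.mul (hr m))
  have hc : ∀ m, Tendsto
      (fun k => (((A k 0 : ℝ) : ℂ) / ((𝒜 0 : ℝ) : ℂ)) / ((A k m : ℝ) : ℂ)) atTop
      (𝓝 (1 / ((𝒜 m : ℝ) : ℂ))) := by
    intro m
    have h1 : Tendsto (fun k => (A k 0 / A k m) / 𝒜 0) atTop (𝓝 ((𝒜 0 / 𝒜 m) / 𝒜 0)) :=
      (h0m m).div_const _
    have h2 := castT h1
    have e : ∀ k, (((A k 0 / A k m) / 𝒜 0 : ℝ) : ℂ) =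
        (((A k 0 : ℝ) : ℂ) / ((𝒜 0 : ℝ) : ℂ)) / ((A k m : ℝ) : ℂ) := by
      intro k; push_cast; ring
    have e2 : (((𝒜 0 / 𝒜 m) / 𝒜 0 : ℝ) : ℂ) = 1 / ((𝒜 m : ℝ) : ℂ) := by
      have h3 : ((𝒜 0 : ℝ) : ℂ) ≠ 0 := Complex.ofReal_ne_zero.mpr (h𝒜 0).ne'
      have h4 : ((𝒜 m : ℝ) : ℂ) ≠ 0 := Complex.ofReal_ne_zero.mpr (h𝒜 m).ne'
      push_cast
      field_simp
    rw [← e2]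
    exact Tendsto.congr e h2
  have hinv : ∀ m, Tendsto (fun k => ((A k m : ℝ) : ℂ)⁻¹) atTop (𝓝 0) := by
    intro m
    have h1 := castT (hA m).inv_tendsto_atTop
    simpa using h1
  have hBlim : ∀ m, Tendsto (fun k => ((B k m : ℝ) : ℂ) / ((A k m : ℝ) : ℂ)) atTop
      (𝓝 (((ℬ m : ℝ) : ℂ) / ((𝒜 m : ℝ) : ℂ))) := by
    intro m
    have h1 := castT (hb m)
    simpa [Complex.ofReal_div] using h1
  have hrlim : ∀ m, Tendsto (fun k => ((A k m : ℝ) : ℂ) / ((A k (m + 1) : ℝ) : ℂ)) atTop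
      (𝓝 (((𝒜 m : ℝ) : ℂ) / ((𝒜 (m + 1) : ℝ) : ℂ))) := by
    intro m
    have h1 := castT (hr m)
    simpa [Complex.ofReal_div] using h1
  intro n
  induction n using Nat.twoStepInduction with
  | zero =>
    refine ⟨?_, ?_, ?_⟩
    · simpa [genP] using tluc_const (g := fun _ : ℕ => (1 : ℂ)) tendsto_const_nhds
    · simp only [genPd, mul_zero]
      exact tluc_const (g := fun _ : ℕ => (0 : ℂ)) tendsto_const_nhds
    · simp only [genPdd, mul_zero]
      exact tluc_const (g := fun _ : ℕ => (0 : ℂ)) tendsto_const_nhds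
  | one =>
    refine ⟨?_, ?_, ?_⟩
    · have e1 : (fun (k : ℕ) (x : ℂ) =>
          genP (fun m => ((A k m : ℝ) : ℂ)) (fun m => ((B k m : ℝ) : ℂ)) 1 x) =
          fun k x => x * ((A k 0 : ℝ) : ℂ)⁻¹ - ((B k 0 : ℝ) : ℂ) / ((A k 0 : ℝ) : ℂ) := by
        funext k x
        simp only [genP, div_eq_mul_inv]
        ring
      have e2 : (fun _ : ℂ => genP (fun m => ((𝒜 m : ℝ) : ℂ)) (fun m => ((ℬ m : ℝ) : ℂ)) 1 0) =
          fun _ : ℂ => (0 : ℂ) - ((ℬ 0 : ℝ) : ℂ) / ((𝒜 0 : ℝ) : ℂ) := by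
        funext x
        simp only [genP, div_eq_mul_inv]
        ring
      rw [e1, e2]
      exact tluc_sub (tluc_xmul (hinv 0)) (tluc_const (hBlim 0))
    · have e1 : (fun (k : ℕ) (x : ℂ) => (((A k 0 : ℝ) : ℂ) / ((𝒜 0 : ℝ) : ℂ)) *
          genPd (fun m => ((A k m : ℝ) : ℂ)) (fun m => ((B k m : ℝ) : ℂ)) 1 x) =
          fun (k : ℕ) (_ : ℂ) =>
            (((A k 0 : ℝ) : ℂ) / ((𝒜 0 : ℝ) : ℂ)) / ((A k 0 : ℝ) : ℂ) := by
        funext k x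
        simp only [genPd, div_eq_mul_inv]
        ring
      have e2 : (fun _ : ℂ => genPd (fun m => ((𝒜 m : ℝ) : ℂ)) (fun m => ((ℬ m : ℝ) : ℂ)) 1 0) =
          fun _ : ℂ => 1 / ((𝒜 0 : ℝ) : ℂ) := by
        funext x
        simp only [genPd]
      rw [e1, e2]
      exact tluc_const (hc 0)
    · simp only [genPdd, mul_zero]
      exact tluc_const (g := fun _ : ℕ => (0 : ℂ)) tendsto_const_nhds
  | more n ih1 ih2 =>
    obtain ⟨P0, D0, S0⟩ := ih1
    obtain ⟨P1, D1, S1⟩ := ih2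
    refine ⟨?_, ?_, ?_⟩
    · have e1 : (fun (k : ℕ) (x : ℂ) =>
          genP (fun m => ((A k m : ℝ) : ℂ)) (fun m => ((B k m : ℝ) : ℂ)) (n + 2) x) =
          fun k x =>
            (x * ((A k (n + 1) : ℝ) : ℂ)⁻¹ - ((B k (n + 1) : ℝ) : ℂ) / ((A k (n + 1) : ℝ) : ℂ)) *
              genP (fun m => ((A k m : ℝ) : ℂ)) (fun m => ((B k m : ℝ) : ℂ)) (n + 1) x -
            (((A k n : ℝ) : ℂ) / ((A k (n + 1) : ℝ) : ℂ)) *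
              genP (fun m => ((A k m : ℝ) : ℂ)) (fun m => ((B k m : ℝ) : ℂ)) n x := by
        funext k x
        simp only [genP, div_eq_mul_inv]
        ring
      have e2 : (fun _ : ℂ =>
          genP (fun m => ((𝒜 m : ℝ) : ℂ)) (fun m => ((ℬ m : ℝ) : ℂ)) (n + 2) 0) =
          fun _ : ℂ =>
            ((0 : ℂ) - ((ℬ (n + 1) : ℝ) : ℂ) / ((𝒜 (n + 1) : ℝ) : ℂ)) *
              genP (fun m => ((𝒜 m : ℝ) : ℂ)) (fun m => ((ℬ m : ℝ) : ℂ)) (n + 1) 0 -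
            (((𝒜 n : ℝ) : ℂ) / ((𝒜 (n + 1) : ℝ) : ℂ)) *
              genP (fun m => ((𝒜 m : ℝ) : ℂ)) (fun m => ((ℬ m : ℝ) : ℂ)) n 0 := by
        funext x
        simp only [genP, div_eq_mul_inv]
        ring
      rw [e1, e2]
      exact tluc_sub
        (tluc_mul (tluc_sub (tluc_xmul (hinv (n + 1))) (tluc_const (hBlim (n + 1)))) P1)
        (tluc_mul (tluc_const (hrlim n)) P0)
    · have e1 : (fun (k : ℕ) (x : ℂ) => (((A k 0 : ℝ) : ℂ) / ((𝒜 0 : ℝ) : ℂ)) *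
          genPd (fun m => ((A k m : ℝ) : ℂ)) (fun m => ((B k m : ℝ) : ℂ)) (n + 2) x) =
          fun k x =>
            ((((A k 0 : ℝ) : ℂ) / ((𝒜 0 : ℝ) : ℂ)) / ((A k (n + 1) : ℝ) : ℂ)) *
              genP (fun m => ((A k m : ℝ) : ℂ)) (fun m => ((B k m : ℝ) : ℂ)) (n + 1) x +
            (x * ((A k (n + 1) : ℝ) : ℂ)⁻¹ - ((B k (n + 1) : ℝ) : ℂ) / ((A k (n + 1) : ℝ) : ℂ)) *
              ((((A k 0 : ℝ) : ℂ) / ((𝒜 0 : ℝ) : ℂ)) *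
                genPd (fun m => ((A k m : ℝ) : ℂ)) (fun m => ((B k m : ℝ) : ℂ)) (n + 1) x) -
            (((A k n : ℝ) : ℂ) / ((A k (n + 1) : ℝ) : ℂ)) *
              ((((A k 0 : ℝ) : ℂ) / ((𝒜 0 : ℝ) : ℂ)) *
                genPd (fun m => ((A k m : ℝ) : ℂ)) (fun m => ((B k m : ℝ) : ℂ)) n x) := by
        funext k x
        simp only [genPd, div_eq_mul_inv]
        ring
      have e2 : (fun _ : ℂ =>
          genPd (fun m => ((𝒜 m : ℝ) : ℂ)) (fun m => ((ℬ m : ℝ) : ℂ)) (n + 2) 0) =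
          fun _ : ℂ =>
            (1 / ((𝒜 (n + 1) : ℝ) : ℂ)) *
              genP (fun m => ((𝒜 m : ℝ) : ℂ)) (fun m => ((ℬ m : ℝ) : ℂ)) (n + 1) 0 +
            ((0 : ℂ) - ((ℬ (n + 1) : ℝ) : ℂ) / ((𝒜 (n + 1) : ℝ) : ℂ)) *
              genPd (fun m => ((𝒜 m : ℝ) : ℂ)) (fun m => ((ℬ m : ℝ) : ℂ)) (n + 1) 0 -
            (((𝒜 n : ℝ) : ℂ) / ((𝒜 (n + 1) : ℝ) : ℂ)) *
              genPd (fun m => ((𝒜 m : ℝ) : ℂ)) (fun m => ((ℬ m : ℝ) : ℂ)) n 0 := by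
        funext x
        simp only [genPd, div_eq_mul_inv]
        ring
      rw [e1, e2]
      exact tluc_sub
        (tluc_add (tluc_mul (tluc_const (hc (n + 1))) P1)
          (tluc_mul (tluc_sub (tluc_xmul (hinv (n + 1))) (tluc_const (hBlim (n + 1)))) D1))
        (tluc_mul (tluc_const (hrlim n)) D0)
    · have e1 : (fun (k : ℕ) (x : ℂ) => (((A k 0 : ℝ) : ℂ) / ((𝒜 0 : ℝ) : ℂ)) ^ 2 *
          genPdd (fun m => ((A k m : ℝ) : ℂ)) (fun m => ((B k m : ℝ) : ℂ)) (n + 2) x) =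
          fun k x =>
            ((((A k 0 : ℝ) : ℂ) / ((𝒜 0 : ℝ) : ℂ)) / ((A k (n + 1) : ℝ) : ℂ)) *
              ((2 : ℂ) * ((((A k 0 : ℝ) : ℂ) / ((𝒜 0 : ℝ) : ℂ)) *
                genPd (fun m => ((A k m : ℝ) : ℂ)) (fun m => ((B k m : ℝ) : ℂ)) (n + 1) x)) +
            (x * ((A k (n + 1) : ℝ) : ℂ)⁻¹ - ((B k (n + 1) : ℝ) : ℂ) / ((A k (n + 1) : ℝ) : ℂ)) *
              ((((A k 0 : ℝ) : ℂ) / ((𝒜 0 : ℝ) : ℂ)) ^ 2 *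
                genPdd (fun m => ((A k m : ℝ) : ℂ)) (fun m => ((B k m : ℝ) : ℂ)) (n + 1) x) -
            (((A k n : ℝ) : ℂ) / ((A k (n + 1) : ℝ) : ℂ)) *
              ((((A k 0 : ℝ) : ℂ) / ((𝒜 0 : ℝ) : ℂ)) ^ 2 *
                genPdd (fun m => ((A k m : ℝ) : ℂ)) (fun m => ((B k m : ℝ) : ℂ)) n x) := by
        funext k x
        simp only [genPdd, div_eq_mul_inv]
        ring
      have e2 : (fun _ : ℂ =>
          genPdd (fun m => ((𝒜 m : ℝ) : ℂ)) (fun m => ((ℬ m : ℝ) : ℂ)) (n + 2) 0) =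
          fun _ : ℂ =>
            (1 / ((𝒜 (n + 1) : ℝ) : ℂ)) *
              ((2 : ℂ) * genPd (fun m => ((𝒜 m : ℝ) : ℂ)) (fun m => ((ℬ m : ℝ) : ℂ)) (n + 1) 0) +
            ((0 : ℂ) - ((ℬ (n + 1) : ℝ) : ℂ) / ((𝒜 (n + 1) : ℝ) : ℂ)) *
              genPdd (fun m => ((𝒜 m : ℝ) : ℂ)) (fun m => ((ℬ m : ℝ) : ℂ)) (n + 1) 0 -
            (((𝒜 n : ℝ) : ℂ) / ((𝒜 (n + 1) : ℝ) : ℂ)) *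
              genPdd (fun m => ((𝒜 m : ℝ) : ℂ)) (fun m => ((ℬ m : ℝ) : ℂ)) n 0 := by
        funext x
        simp only [genPdd, div_eq_mul_inv]
        ring
      rw [e1, e2]
      exact tluc_sub
        (tluc_add (tluc_mul (tluc_const (hc (n + 1)))
            (tluc_mul (tluc_const (g := fun _ : ℕ => (2 : ℂ)) tendsto_const_nhds) D1))
          (tluc_mul (tluc_sub (tluc_xmul (hinv (n + 1))) (tluc_const (hBlim (n + 1)))) S1))
        (tluc_mul (tluc_const (hrlim n)) S0)

lemma assocP_eq (a b : ℕ → ℝ) (K : ℕ) : ∀ n, assocP a b K n =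
    genP (fun m => ((a (m + K) : ℝ) : ℂ)) (fun m => ((b (m + K) : ℝ) : ℂ)) n := by
  intro n
  induction n using Nat.twoStepInduction with
  | zero => funext x; simp [assocP, genP]
  | one => funext x; simp [assocP, genP]
  | more n ih1 ih2 => funext x; simp only [assocP, genP, ih1, ih2]

lemma frakP_eq (α β : ℤ → ℝ) (i : ℤ) : ∀ n, frakP α β i n =
    genP (fun m => ((α ((m : ℤ) + i) : ℝ) : ℂ)) (fun m => ((β ((m : ℤ) + i) : ℝ) : ℂ)) n := by
  intro n
  induction n using Nat.twoStepInduction with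
  | zero => funext x; simp [frakP, genP]
  | one => funext x; simp [frakP, genP]
  | more n ih1 ih2 =>
    funext x
    simp only [frakP, genP, ih1, ih2]
    have e1 : (((n + 1 : ℕ) : ℤ) + i) = (n : ℤ) + 1 + i := by push_cast; ring
    rw [e1]

lemma per_mul {γ : ℤ → ℝ} (N : ℕ) (hγ : ∀ n : ℤ, γ (n + N) = γ n) :
    ∀ (k : ℕ) (z : ℤ), γ (z + k * N) = γ z := by
  intro k
  induction k with
  | zero => intro z; simp
  | succ k ih =>
    intro z
    have e : (z + ((k : ℕ) + 1 : ℕ) * N : ℤ) = (z + k * N) + N := by push_cast; ring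
    rw [e, hγ, ih]

end JacobiAux7

open JacobiAux7 in
/-- Proposition 3 of the paper. For `N`-periodically modulated Jacobi
parameters, `p_n^{[kN+i]}` and its (suitably rescaled) first two derivatives converge
locally uniformly on `ℂ` to the constants `𝔭_n^{[i]}(0)`, `(𝔭_n^{[i]})'(0)`,
`(𝔭_n^{[i]})''(0)`. -/
theorem assoc_polynomials_tendsto_of_periodically_modulated
    (N : ℕ) (hN : 0 < N) (a b : ℕ → ℝ) (ha : ∀ n, 0 < a n)
    (α β : ℤ → ℝ) (hα : ∀ n, 0 < α n)
    (hαper : ∀ n : ℤ, α (n + N) = α n) (hβper : ∀ n : ℤ, β (n + N) = β n)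
    (hmod_a : Tendsto a atTop atTop)
    (hmod_r : Tendsto (fun n : ℕ =>
      |a n / a (n + 1) - α (n : ℤ) / α ((n : ℤ) + 1)|) atTop (𝓝 0))
    (hmod_b : Tendsto (fun n : ℕ =>
      |b n / a n - β (n : ℤ) / α (n : ℤ)|) atTop (𝓝 0))
    (i : ℕ) (hi : i < N) (n : ℕ) :
    TendstoLocallyUniformly
      (fun (k : ℕ) (x : ℂ) => assocP a b (k * N + i) n x)
      (fun _ : ℂ => frakP α β (i : ℤ) n 0) atTop ∧
    TendstoLocallyUniformly
      (fun (k : ℕ) (x : ℂ) =>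
        ((a (k * N + i) / α (i : ℤ) : ℝ) : ℂ) * deriv (assocP a b (k * N + i) n) x)
      (fun _ : ℂ => deriv (frakP α β (i : ℤ) n) 0) atTop ∧
    TendstoLocallyUniformly
      (fun (k : ℕ) (x : ℂ) =>
        ((a (k * N + i) / α (i : ℤ) : ℝ) : ℂ) ^ 2 *
          deriv (deriv (assocP a b (k * N + i) n)) x)
      (fun _ : ℂ => deriv (deriv (frakP α β (i : ℤ) n)) 0) atTop := by
  -- index map tends to infinity
  have hidx : ∀ m : ℕ, Tendsto (fun k : ℕ => m + (k * N + i)) atTop atTop := by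
    intro m
    refine tendsto_atTop_mono (fun k => ?_) tendsto_id
    have h1 : k ≤ k * N := Nat.le_mul_of_pos_right k hN
    simp only [id_eq]
    omega
  have hcast : ∀ m k : ℕ, ((m + (k * N + i) : ℕ) : ℤ) = ((m : ℤ) + i) + k * N := by
    intro m k; push_cast; ring
  -- hypotheses for gen_main
  have ha' : ∀ m : ℕ, Tendsto (fun k : ℕ => a (m + (k * N + i))) atTop atTop :=
    fun m => hmod_a.comp (hidx m)
  have h0r : Tendsto (fun n : ℕ => a n / a (n + 1) - α (n : ℤ) / α ((n : ℤ) + 1))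
      atTop (𝓝 0) := (tendsto_zero_iff_abs_tendsto_zero _).mpr hmod_r
  have h0b : Tendsto (fun n : ℕ => b n / a n - β (n : ℤ) / α (n : ℤ)) atTop (𝓝 0) :=
    (tendsto_zero_iff_abs_tendsto_zero _).mpr hmod_b
  have hr' : ∀ m : ℕ, Tendsto
      (fun k : ℕ => a (m + (k * N + i)) / a (m + 1 + (k * N + i))) atTop
      (𝓝 (α ((m : ℤ) + i) / α (((m + 1 : ℕ) : ℤ) + i))) := by
    intro m
    have hcomp := h0r.comp (hidx m)
    have e : ∀ k : ℕ,
        a (m + (k * N + i)) / a (m + (k * N + i) + 1) -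
          α ((m + (k * N + i) : ℕ) : ℤ) / α (((m + (k * N + i) : ℕ) : ℤ) + 1) =
        a (m + (k * N + i)) / a (m + 1 + (k * N + i)) -
          α ((m : ℤ) + i) / α (((m + 1 : ℕ) : ℤ) + i) := by
      intro k
      have ea : a (m + (k * N + i) + 1) = a (m + 1 + (k * N + i)) := by
        rw [show m + (k * N + i) + 1 = m + 1 + (k * N + i) from by omega]
      have eα1 : α ((m + (k * N + i) : ℕ) : ℤ) = α ((m : ℤ) + i) := by
        rw [hcast m k]; exact per_mul N hαper k _
      have eα2 : α (((m + (k * N + i) : ℕ) : ℤ) + 1) = α (((m + 1 : ℕ) : ℤ) + i) := by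
        rw [show ((m + (k * N + i) : ℕ) : ℤ) + 1 = (((m + 1 : ℕ) : ℤ) + i) + k * N from by
          push_cast; ring]
        exact per_mul N hαper k _
      rw [ea, eα1, eα2]
    exact tendsto_sub_nhds_zero_iff.mp (Tendsto.congr e hcomp)
  have hb' : ∀ m : ℕ, Tendsto
      (fun k : ℕ => b (m + (k * N + i)) / a (m + (k * N + i))) atTop
      (𝓝 (β ((m : ℤ) + i) / α ((m : ℤ) + i))) := by
    intro m
    have hcomp := h0b.comp (hidx m)
    have e : ∀ k : ℕ,
        b (m + (k * N + i)) / a (m + (k * N + i)) -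
          β ((m + (k * N + i) : ℕ) : ℤ) / α ((m + (k * N + i) : ℕ) : ℤ) =
        b (m + (k * N + i)) / a (m + (k * N + i)) -
          β ((m : ℤ) + i) / α ((m : ℤ) + i) := by
      intro k
      have eα : α ((m + (k * N + i) : ℕ) : ℤ) = α ((m : ℤ) + i) := by
        rw [hcast m k]; exact per_mul N hαper k _
      have eβ : β ((m + (k * N + i) : ℕ) : ℤ) = β ((m : ℤ) + i) := by
        rw [hcast m k]; exact per_mul N hβper k _
      rw [eα, eβ]
    exact tendsto_sub_nhds_zero_iff.mp (Tendsto.congr e hcomp)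
  have H := gen_main (fun k m => a (m + (k * N + i))) (fun k m => b (m + (k * N + i)))
    (fun m => α ((m : ℤ) + i)) (fun m => β ((m : ℤ) + i))
    (fun k m => ha _) (fun m => hα _) ha' hr' hb' n
  -- scalar identification
  have Ec : ∀ k : ℕ, ((a (k * N + i) / α (i : ℤ) : ℝ) : ℂ) =
      ((a (0 + (k * N + i)) : ℝ) : ℂ) / ((α (((0 : ℕ) : ℤ) + i) : ℝ) : ℂ) := by
    intro k
    simp [Complex.ofReal_div]
  have Ederiv : ∀ k : ℕ, deriv (assocP a b (k * N + i) n) =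
      genPd (fun m => ((a (m + (k * N + i)) : ℝ) : ℂ))
        (fun m => ((b (m + (k * N + i)) : ℝ) : ℂ)) n := by
    intro k
    rw [assocP_eq]
    exact (genP_reg _ _ n).2.1
  have Ederiv2 : ∀ k : ℕ, deriv (deriv (assocP a b (k * N + i) n)) =
      genPdd (fun m => ((a (m + (k * N + i)) : ℝ) : ℂ))
        (fun m => ((b (m + (k * N + i)) : ℝ) : ℂ)) n := by
    intro k
    rw [assocP_eq, (genP_reg _ _ n).2.1]
    exact (genP_reg _ _ n).2.2.2
  refine ⟨?_, ?_, ?_⟩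
  · have E1 : (fun (k : ℕ) (x : ℂ) => assocP a b (k * N + i) n x) =
        fun (k : ℕ) (x : ℂ) => genP (fun m => ((a (m + (k * N + i)) : ℝ) : ℂ))
          (fun m => ((b (m + (k * N + i)) : ℝ) : ℂ)) n x := by
      funext k x; rw [assocP_eq]
    have E2 : (fun _ : ℂ => frakP α β (i : ℤ) n 0) =
        fun _ : ℂ => genP (fun m => ((α ((m : ℤ) + i) : ℝ) : ℂ))
          (fun m => ((β ((m : ℤ) + i) : ℝ) : ℂ)) n 0 := by
      rw [frakP_eq]
    rw [E1, E2]
    exact H.1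
  · have E1 : (fun (k : ℕ) (x : ℂ) =>
        ((a (k * N + i) / α (i : ℤ) : ℝ) : ℂ) * deriv (assocP a b (k * N + i) n) x) =
        fun (k : ℕ) (x : ℂ) =>
          (((a (0 + (k * N + i)) : ℝ) : ℂ) / ((α (((0 : ℕ) : ℤ) + i) : ℝ) : ℂ)) *
          genPd (fun m => ((a (m + (k * N + i)) : ℝ) : ℂ))
            (fun m => ((b (m + (k * N + i)) : ℝ) : ℂ)) n x := by
      funext k x; rw [Ec k, Ederiv k]
    have E2 : (fun _ : ℂ => deriv (frakP α β (i : ℤ) n) 0) =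
        fun _ : ℂ => genPd (fun m => ((α ((m : ℤ) + i) : ℝ) : ℂ))
          (fun m => ((β ((m : ℤ) + i) : ℝ) : ℂ)) n 0 := by
      rw [frakP_eq α β (i : ℤ), (genP_reg _ _ n).2.1]
    rw [E1, E2]
    exact H.2.1
  · have E1 : (fun (k : ℕ) (x : ℂ) =>
        ((a (k * N + i) / α (i : ℤ) : ℝ) : ℂ) ^ 2 *
          deriv (deriv (assocP a b (k * N + i) n)) x) =
        fun (k : ℕ) (x : ℂ) =>
          (((a (0 + (k * N + i)) : ℝ) : ℂ) / ((α (((0 : ℕ) : ℤ) + i) : ℝ) : ℂ)) ^ 2 *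
          genPdd (fun m => ((a (m + (k * N + i)) : ℝ) : ℂ))
            (fun m => ((b (m + (k * N + i)) : ℝ) : ℂ)) n x := by
      funext k x; rw [Ec k, Ederiv2 k]
    have E2 : (fun _ : ℂ => deriv (deriv (frakP α β (i : ℤ) n)) 0) =
        fun _ : ℂ => genPdd (fun m => ((α ((m : ℤ) + i) : ℝ) : ℂ))
          (fun m => ((β ((m : ℤ) + i) : ℝ) : ℂ)) n 0 := by
      rw [frakP_eq α β (i : ℤ), (genP_reg _ _ n).2.1]
      rw [(genP_reg _ _ n).2.2.2]
    rw [E1, E2]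
    exact H.2.2
end
end

section
/- Suppose the Jacobi parameters (a_n), (b_n) are N-periodically modulated. Then for each i ∈ {0, 1, …, N−1}, as k → ∞: (a) tr X_{kN+i}(x) → tr 𝔛_0(0); (b) (a_{kN+i}/α_i) · tr X_{kN+i}′(x) → tr 𝔛_0′(0); (c) (a_{kN+i}/α_i)² · tr X_{kN+i}″(x) → tr 𝔛_0″(0); in each case locally uniformly with respect to x ∈ ℂ (here ′ denotes the derivative in x of the matrix entries, which are polynomials in x). -/
/-!
Put `n = kN + i` and `s = a_n / α_i`. As a matrix in `y`, `B_{n+j}(s y)` has the form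
`[[0, 1], [-r, σ y - q]]` with `(r, σ, q) = (a_{n+j-1}/a_{n+j}, s/a_{n+j}, b_{n+j}/a_{n+j})`,
and by the modulation hypotheses and the periodicity of `α, β` these parameters converge to those of
`𝔅_{i+j}(y)`. The trace of the product is jointly continuous in the parameters and `y`, so
`tr X_n(s y) → tr 𝔛_i(y) = tr 𝔛_0(y)` locally uniformly; being entire in `y`, its first two
`y`-derivatives converge locally uniformly as well (Weierstrass), and these are `s` and `s²` times
the `x`-derivatives. Evaluating at `y = x / s → 0` gives the three limits.
-/

open Filter Topology

attribute [local instance] Matrix.normedAddCommGroup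

noncomputable section

abbrev Mat2C := Matrix (Fin 2) (Fin 2) ℂ

/-- The transfer matrix `B_n(x)` built from the Jacobi parameters `(a_n)`, `(b_n)`. -/
def BmatC (a b : ℕ → ℝ) (n : ℕ) (x : ℂ) : Mat2C :=
  !![0, 1; -(a (n - 1) : ℂ) / (a n : ℂ), (x - (b n : ℂ)) / (a n : ℂ)]

/-- The transfer matrix `𝔅_j(x)` built from the periodic sequences `(α_n)`, `(β_n)`. -/
def frakBC (α β : ℤ → ℝ) (j : ℤ) (x : ℂ) : Mat2C :=
  !![0, 1; -(α (j - 1) : ℂ) / (α j : ℂ), (x - (β j : ℂ)) / (α j : ℂ)]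

/-- Product in decreasing index order: `prodDC C n0 len = C (n0+len-1) ⋯ C n0`. -/
def prodDC (C : ℕ → Mat2C) (n0 : ℕ) : ℕ → Mat2C
  | 0 => 1
  | (len + 1) => C (n0 + len) * prodDC C n0 len

/-- `N`-step transfer matrix `X_n(x) = B_{n+N-1}(x) ⋯ B_n(x)`. -/
def XmatC (a b : ℕ → ℝ) (N n : ℕ) (x : ℂ) : Mat2C :=
  prodDC (fun j => BmatC a b j x) n N

/-- `𝔛_n(x) = 𝔅_{n+N-1}(x) ⋯ 𝔅_n(x)`; here we only need `𝔛_0`. -/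
def frakXC (α β : ℤ → ℝ) (N : ℕ) (x : ℂ) : Mat2C :=
  prodDC (fun j : ℕ => frakBC α β (j : ℤ) x) 0 N

theorem Continuous.tendstoLocallyUniformly_of_tendsto {ι P X Y : Type*} [TopologicalSpace P]
    [TopologicalSpace X] [UniformSpace Y] {Φ : P → X → Y} (hΦ : Continuous ↿Φ) {l : Filter ι}
    {p : ι → P} {p₀ : P} (hp : Tendsto p l (𝓝 p₀)) :
    TendstoLocallyUniformly (fun k => Φ (p k)) (Φ p₀) l := by
  refine tendstoLocallyUniformly_iff_filter.2 fun x₀ => ?_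
  have h₁ : Tendsto (fun q : ι × X => Φ p₀ q.2) (l ×ˢ 𝓝 x₀) (𝓝 (Φ p₀ x₀)) :=
    ((hΦ.comp (Continuous.prodMk_right p₀)).tendsto x₀).comp tendsto_snd
  have h₂ : Tendsto (fun q : ι × X => Φ (p q.1) q.2) (l ×ˢ 𝓝 x₀) (𝓝 (Φ p₀ x₀)) :=
    (hΦ.tendsto (p₀, x₀)).comp ((hp.comp tendsto_fst).prodMk_nhds tendsto_snd)
  exact (h₁.prodMk_nhds h₂).mono_right (nhds_le_uniformity _)

theorem Continuous.continuous_uncurry_deriv {P E : Type*} [TopologicalSpace P]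
    [NormedAddCommGroup E] [NormedSpace ℂ E] [CompleteSpace E] {Φ : P → ℂ → E}
    (hΦ : Continuous ↿Φ) (hd : ∀ p, Differentiable ℂ (Φ p)) :
    Continuous ↿(fun p => deriv (Φ p)) := by
  refine continuous_iff_continuousAt.2 fun ⟨p₀, y₀⟩ => ?_
  have h := (hΦ.tendstoLocallyUniformly_of_tendsto
    (continuous_fst.tendsto (p₀, y₀))).tendstoLocallyUniformlyOn (s := Set.univ)
  have hderiv := h.deriv (Eventually.of_forall fun q => (hd q.1).differentiableOn) isOpen_univ
  rw [tendstoLocallyUniformlyOn_univ] at hderiv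
  exact hderiv.tendsto_comp (hd p₀).deriv.continuous.continuousAt
    (continuous_snd.tendsto (p₀, y₀))

theorem deriv_deriv_comp_mul_left {𝕜 : Type*} [NontriviallyNormedField 𝕜] (f : 𝕜 → 𝕜)
    (c x : 𝕜) :
    deriv (deriv fun y => f (c * y)) x = c ^ 2 * deriv (deriv f) (c * x) := by
  have h : deriv (fun y => f (c * y)) = fun y => c * deriv f (c * y) :=
    funext fun y => deriv_comp_mul_left c f y
  rw [h, deriv_const_mul_field']
  change c * deriv (fun y => deriv f (c * y)) x = _
  rw [deriv_comp_mul_left, smul_eq_mul, sq, mul_assoc]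

theorem Continuous.tendstoLocallyUniformly_comp_mul {ι P : Type*} [TopologicalSpace P]
    {Φ : P → ℂ → ℂ} (hΦ : Continuous ↿Φ) {l : Filter ι} {p : ι → P} {p₀ : P}
    (hp : Tendsto p l (𝓝 p₀)) {t : ι → ℂ} (ht : Tendsto t l (𝓝 0)) :
    TendstoLocallyUniformly (fun k x => Φ (p k) (t k * x)) (fun _ => Φ p₀ 0) l := by
  have hΨ : Continuous fun q : (P × ℂ) × ℂ => Φ q.1.1 (q.1.2 * q.2) :=
    hΦ.comp (continuous_fst.fst.prodMk (continuous_fst.snd.mul continuous_snd))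
  simpa using hΨ.tendstoLocallyUniformly_of_tendsto (Φ := fun q x => Φ q.1 (q.2 * x))
    (hp.prodMk_nhds ht)

theorem tendsto_mul_add_atTop {N : ℕ} (hN : 0 < N) (c : ℕ) :
    Tendsto (fun k : ℕ => k * N + c) atTop atTop :=
  tendsto_atTop_mono (fun k => (Nat.le_mul_of_pos_right k hN).trans (Nat.le_add_right _ c))
    tendsto_id

theorem tendsto_mul_add_of_abs_sub_tendsto_zero {f : ℕ → ℝ} {g : ℤ → ℝ} {N : ℕ} (hN : 0 < N)
    (hg : Function.Periodic g N) (hfg : Tendsto (fun n : ℕ => |f n - g n|) atTop (𝓝 0))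
    (c : ℕ) : Tendsto (fun k : ℕ => f (k * N + c)) atTop (𝓝 (g c)) := by
  rw [tendsto_iff_dist_tendsto_zero]
  refine (hfg.comp (tendsto_mul_add_atTop hN c)).congr fun k => ?_
  have hgc : g ((k * N + c : ℕ) : ℤ) = g c := by
    push_cast
    rw [add_comm]
    exact hg.nat_mul k c
  simp only [Function.comp_apply, Real.dist_eq, hgc]

namespace Jacobi

theorem prodDC_add (C : ℕ → Mat2C) (n₀ l₁ l₂ : ℕ) :
    prodDC C n₀ (l₁ + l₂) = prodDC C (n₀ + l₁) l₂ * prodDC C n₀ l₁ := by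
  induction l₂ with
  | zero => simp [prodDC]
  | succ l ih => rw [← add_assoc, prodDC, prodDC, ih, mul_assoc, add_assoc]

theorem prodDC_shift (C : ℕ → Mat2C) (m n₀ len : ℕ) :
    prodDC (fun j => C (m + j)) n₀ len = prodDC C (m + n₀) len := by
  induction len with
  | zero => rfl
  | succ l ih => simp only [prodDC, ih, add_assoc]

theorem trace_prodDC_of_periodic {D : ℕ → Mat2C} {N : ℕ} (hD : Function.Periodic D N)
    {i : ℕ} (hi : i ≤ N) :
    Matrix.trace (prodDC D i N) = Matrix.trace (prodDC D 0 N) := by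
  have hshift : prodDC D N i = prodDC D 0 i := by
    rw [← add_zero N, ← prodDC_shift]
    congr 1
    exact funext fun j => by rw [add_comm, hD]
  have hsplit₀ := prodDC_add D 0 i (N - i)
  have hsplitᵢ := prodDC_add D i (N - i) i
  rw [Nat.add_sub_cancel' hi, zero_add] at hsplit₀
  rw [Nat.sub_add_cancel hi, Nat.add_sub_cancel' hi, hshift] at hsplitᵢ
  rw [hsplitᵢ, Matrix.trace_mul_comm, ← hsplit₀]

theorem continuous_prodDC {X : Type*} [TopologicalSpace X] {C : ℕ → X → Mat2C}
    (hC : ∀ m, Continuous (C m)) (n₀ len : ℕ) :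
    Continuous fun x => prodDC (fun m => C m x) n₀ len := by
  induction len with
  | zero => exact continuous_const
  | succ l ih => exact (hC (n₀ + l)).matrix_mul ih

theorem differentiable_prodDC_apply {C : ℕ → ℂ → Mat2C}
    (hC : ∀ m i j, Differentiable ℂ fun y => C m y i j) (n₀ len : ℕ) (i j : Fin 2) :
    Differentiable ℂ fun y => prodDC (fun m => C m y) n₀ len i j := by
  induction len generalizing i j with
  | zero => exact differentiable_const _
  | succ l ih =>
    simp only [prodDC, Matrix.mul_apply]
    exact Differentiable.fun_sum fun m _ => (hC _ i m).mul (ih m j)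

def step (c : ℝ × ℝ × ℝ) (y : ℂ) : Mat2C :=
  !![0, 1; -(c.1 : ℂ), c.2.1 * y - c.2.2]

def traceProd (N : ℕ) (p : ℕ → ℝ × ℝ × ℝ) (y : ℂ) : ℂ :=
  Matrix.trace (prodDC (fun m => step (p m) y) 0 N)

theorem step_div (u v s w : ℝ) (y : ℂ) :
    step (u / v, s / v, w / v) y = !![0, 1; -(u : ℂ) / v, (s * y - w) / v] := by
  ext i j
  fin_cases i <;> fin_cases j <;> simp [step] <;> ring

theorem continuous_traceProd (N : ℕ) : Continuous ↿(traceProd N) := by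
  refine (continuous_prodDC (fun m => ?_) 0 N).matrix_trace
  refine continuous_matrix fun i j => ?_
  fin_cases i <;> fin_cases j <;> simp [step] <;> fun_prop

theorem differentiable_traceProd (N : ℕ) (p : ℕ → ℝ × ℝ × ℝ) :
    Differentiable ℂ (traceProd N p) := by
  have hstep : ∀ m i j, Differentiable ℂ fun y => step (p m) y i j := fun m i j => by
    fin_cases i <;> fin_cases j <;> simp [step]
    fun_prop
  have h := differentiable_prodDC_apply hstep 0 N
  unfold traceProd
  simp only [Matrix.trace_fin_two]
  exact (h 0 0).fun_add (h 1 1)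

def rescaledParams (a b : ℕ → ℝ) (n : ℕ) (s : ℝ) (j : ℕ) : ℝ × ℝ × ℝ :=
  (a (n + j - 1) / a (n + j), s / a (n + j), b (n + j) / a (n + j))

def periodicParams (α β : ℤ → ℝ) (i j : ℕ) : ℝ × ℝ × ℝ :=
  (α (i + j - 1) / α (i + j), 1 / α (i + j), β (i + j) / α (i + j))

theorem XmatC_mul_eq (a b : ℕ → ℝ) (N n : ℕ) (s : ℝ) (y : ℂ) :
    XmatC a b N n (s * y) = prodDC (fun m => step (rescaledParams a b n s m) y) 0 N := by
  rw [XmatC, ← add_zero n, ← prodDC_shift, add_zero]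
  simp only [rescaledParams, step_div, BmatC]

theorem trace_frakXC_eq_traceProd {α β : ℤ → ℝ} {N : ℕ} (hαper : Function.Periodic α N)
    (hβper : Function.Periodic β N) {i : ℕ} (hi : i ≤ N) (y : ℂ) :
    Matrix.trace (frakXC α β N y) = traceProd N (periodicParams α β i) y := by
  have hper : Function.Periodic (fun j : ℕ => frakBC α β j y) N := fun j => by
    simp only [frakBC, Nat.cast_add, ← sub_add_eq_add_sub, hαper _, hβper _]
  rw [frakXC, ← trace_prodDC_of_periodic hper hi, ← add_zero i, ← prodDC_shift, add_zero]
  simp only [traceProd, periodicParams, step_div, Complex.ofReal_one, one_mul, frakBC,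
    Nat.cast_add]

section Modulated

variable {N : ℕ} {a b : ℕ → ℝ} {α β : ℤ → ℝ}

theorem tendsto_pred_div (hN : 0 < N) (hαper : Function.Periodic α N)
    (hmod_r : Tendsto (fun n : ℕ => |a n / a (n + 1) - α n / α (n + 1)|) atTop (𝓝 0))
    (c : ℕ) :
    Tendsto (fun k : ℕ => a (k * N + c - 1) / a (k * N + c)) atTop
      (𝓝 (α (c - 1) / α c)) := by
  have h := tendsto_mul_add_of_abs_sub_tendsto_zero (f := fun n => a n / a (n + 1))
    (g := fun m => α m / α (m + 1)) hN (hαper.div (hαper.add_const 1)) hmod_r (N + c - 1)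
  -- shifting `k` by one makes the offset `N + c - 1` an honest natural number even for `c = 0`
  rw [← tendsto_add_atTop_iff_nat 1]
  have hidx : ∀ k, (k + 1) * N + c - 1 = k * N + (N + c - 1) := fun k => by
    rw [add_one_mul]; omega
  have hidx' : ∀ k, (k + 1) * N + c = k * N + (N + c - 1) + 1 := fun k => by
    rw [add_one_mul]; omega
  have hlim : α (c - 1) / α c = α (N + c - 1 : ℕ) / α ((N + c - 1 : ℕ) + 1) := by
    rw [show ((N + c - 1 : ℕ) : ℤ) = (c - 1 : ℤ) + N by omega, hαper, add_right_comm,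
      sub_add_cancel, hαper]
  rw [hlim]
  refine h.congr fun k => ?_
  rw [hidx, hidx']

theorem tendsto_scale_div (hN : 0 < N) (ha : ∀ n, a n ≠ 0) (hα : ∀ n, α n ≠ 0)
    (hαper : Function.Periodic α N)
    (hmod_r : Tendsto (fun n : ℕ => |a n / a (n + 1) - α n / α (n + 1)|) atTop (𝓝 0))
    (i j : ℕ) :
    Tendsto (fun k : ℕ => a (k * N + i) / α i / a (k * N + i + j)) atTop
      (𝓝 (1 / α (i + j))) := by
  induction j with
  | zero =>
    refine tendsto_const_nhds.congr fun k => ?_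
    rw [Nat.cast_zero, add_zero, add_zero, div_right_comm, div_self (ha _)]
  | succ j ih =>
    have hstep := tendsto_mul_add_of_abs_sub_tendsto_zero (f := fun n => a n / a (n + 1))
      (g := fun m => α m / α (m + 1)) hN (hαper.div (hαper.add_const 1)) hmod_r (i + j)
    convert ih.mul hstep using 1
    · funext k
      simp only [← add_assoc]
      field_simp [ha]
    · push_cast
      field_simp [hα]
      ring_nf

theorem tendsto_rescaledParams (hN : 0 < N) (ha : ∀ n, a n ≠ 0) (hα : ∀ n, α n ≠ 0)
    (hαper : Function.Periodic α N) (hβper : Function.Periodic β N)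
    (hmod_r : Tendsto (fun n : ℕ => |a n / a (n + 1) - α n / α (n + 1)|) atTop (𝓝 0))
    (hmod_b : Tendsto (fun n : ℕ => |b n / a n - β n / α n|) atTop (𝓝 0)) (i : ℕ) :
    Tendsto (fun k => rescaledParams a b (k * N + i) (a (k * N + i) / α i)) atTop
      (𝓝 (periodicParams α β i)) := by
  refine tendsto_pi_nhds.2 fun j => ?_
  have hb := tendsto_mul_add_of_abs_sub_tendsto_zero (f := fun n => b n / a n)
    (g := fun m => β m / α m) hN (hβper.div hαper) hmod_b (i + j)
  simpa only [rescaledParams, periodicParams, add_assoc, Nat.cast_add] using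
    (tendsto_pred_div hN hαper hmod_r (i + j)).prodMk_nhds
      ((tendsto_scale_div hN ha hα hαper hmod_r i j).prodMk_nhds hb)

end Modulated

end Jacobi

/-- Corollary 5 of the paper. For `N`-periodically modulated Jacobi
parameters, the traces of `X_{kN+i}` and of its (rescaled) first two derivatives converge
locally uniformly on `ℂ` to `tr 𝔛_0(0)`, `tr 𝔛_0'(0)`, `tr 𝔛_0''(0)`. -/
theorem trace_tendsto_of_periodically_modulated
    (N : ℕ) (hN : 0 < N) (a b : ℕ → ℝ) (ha : ∀ n, 0 < a n)
    (α β : ℤ → ℝ) (hα : ∀ n, 0 < α n)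
    (hαper : ∀ n : ℤ, α (n + N) = α n) (hβper : ∀ n : ℤ, β (n + N) = β n)
    (hmod_a : Tendsto a atTop atTop)
    (hmod_r : Tendsto (fun n : ℕ =>
      |a n / a (n + 1) - α (n : ℤ) / α ((n : ℤ) + 1)|) atTop (𝓝 0))
    (hmod_b : Tendsto (fun n : ℕ =>
      |b n / a n - β (n : ℤ) / α (n : ℤ)|) atTop (𝓝 0))
    (i : ℕ) (hi : i < N) :
    TendstoLocallyUniformly
      (fun (k : ℕ) (x : ℂ) => Matrix.trace (XmatC a b N (k * N + i) x))
      (fun _ : ℂ => Matrix.trace (frakXC α β N 0)) atTop ∧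
    TendstoLocallyUniformly
      (fun (k : ℕ) (x : ℂ) =>
        ((a (k * N + i) / α (i : ℤ) : ℝ) : ℂ) *
          deriv (fun y => Matrix.trace (XmatC a b N (k * N + i) y)) x)
      (fun _ : ℂ => deriv (fun y => Matrix.trace (frakXC α β N y)) 0) atTop ∧
    TendstoLocallyUniformly
      (fun (k : ℕ) (x : ℂ) =>
        ((a (k * N + i) / α (i : ℤ) : ℝ) : ℂ) ^ 2 *
          deriv (deriv (fun y => Matrix.trace (XmatC a b N (k * N + i) y))) x)
      (fun _ : ℂ => deriv (deriv (fun y => Matrix.trace (frakXC α β N y))) 0) atTop := by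
  have ha' : ∀ n, a n ≠ 0 := fun n => (ha n).ne'
  have hα' : ∀ n, α n ≠ 0 := fun n => (hα n).ne'
  have hs : ∀ k : ℕ, ((a (k * N + i) / α i : ℝ) : ℂ) ≠ 0 := fun k =>
    Complex.ofReal_ne_zero.2 (div_pos (ha _) (hα _)).ne'
  have hs_inv : Tendsto (fun k : ℕ => ((a (k * N + i) / α i : ℝ) : ℂ)⁻¹) atTop (𝓝 0) := by
    have h := (hmod_a.comp (tendsto_mul_add_atTop hN i)).atTop_div_const (hα i)
    simpa [Function.comp_def] using
      (Complex.continuous_ofReal.tendsto 0).comp (tendsto_inv_atTop_zero.comp h)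
  have hX : ∀ (k : ℕ) (y : ℂ), Matrix.trace (XmatC a b N (k * N + i) y) =
      Jacobi.traceProd N (Jacobi.rescaledParams a b (k * N + i) (a (k * N + i) / α i))
        (((a (k * N + i) / α i : ℝ) : ℂ)⁻¹ * y) := fun k y => by
    rw [Jacobi.traceProd, ← Jacobi.XmatC_mul_eq, mul_inv_cancel_left₀ (hs k)]
  have hfrak : (fun y => Matrix.trace (frakXC α β N y)) = Jacobi.traceProd N
      (Jacobi.periodicParams α β i) :=
    funext (Jacobi.trace_frakXC_eq_traceProd hαper hβper hi.le)
  have hp := Jacobi.tendsto_rescaledParams hN ha' hα' hαper hβper hmod_r hmod_b i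
  have hΦ := Jacobi.continuous_traceProd N
  have hΦ' := hΦ.continuous_uncurry_deriv (Jacobi.differentiable_traceProd N)
  have hΦ'' := hΦ'.continuous_uncurry_deriv fun p => (Jacobi.differentiable_traceProd N p).deriv
  refine ⟨?_, ?_, ?_⟩
  · exact ((hΦ.tendstoLocallyUniformly_comp_mul hp hs_inv).congr fun k x => (hX k x).symm)
      |>.congr_right fun _ => congrFun hfrak.symm 0
  · rw [hfrak]
    refine (hΦ'.tendstoLocallyUniformly_comp_mul hp hs_inv).congr fun k x => ?_
    rw [funext (hX k), deriv_comp_mul_left, smul_eq_mul, mul_inv_cancel_left₀ (hs k)]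
  · rw [hfrak]
    refine (hΦ''.tendstoLocallyUniformly_comp_mul hp hs_inv).congr fun k x => ?_
    rw [funext (hX k), deriv_deriv_comp_mul_left, ← mul_assoc, ← mul_pow, mul_inv_cancel₀ (hs k),
      one_pow, one_mul]

end
end
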